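/- arXiv:2405.02915 — 12 statements merged into one kernel-verified Lean document; each statement's English description precedes it below -/
import Mathlib

section
/- With the notation of the previous setup (ξ_j are θ-torsion points of φ, B the Moore matrix of the ξ_j, and D = det(B)), one has D^q = (−1)^r · (θ/k_r) · D. -/
/-- For the Moore determinant `D = det B` of θ-torsion points `ξ_1,…,ξ_r` of
`φ_θ = θ + k_1τ + ⋯ + k_rτ^r`, one has `D^q = (−1)^r · (θ/k_r) · D`. -/
theorem stmt4 {F : Type*} [Field F] (p m q r : ℕ) [Fact p.Prime] [CharP F p]
    (hm : 0 < m) (hq : q = p ^ m) (hr : 0 < r)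
    (θ : F) (k : ℕ → F) (hkr : k r ≠ 0)
    (ξ : Fin r → F)
    (htor : ∀ j, θ * ξ j + ∑ i ∈ Finset.Icc 1 r, k i * ξ j ^ q ^ i = 0)
    (B : Matrix (Fin r) (Fin r) F)
    (hB : ∀ i j, B i j = ξ j ^ q ^ (i : ℕ)) :
    B.det ^ q = (-1) ^ r * (θ / k r) * B.det := by
  obtain ⟨n, rfl⟩ : ∃ n, r = n + 1 := ⟨r - 1, (Nat.succ_pred_eq_of_pos hr).symm⟩
  set f : F →+* F := iterateFrobenius F p m with hf
  have hfx : ∀ x : F, f x = x ^ q := by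
    intro x; rw [hf, iterateFrobenius_def, hq]
  -- the cyclically-rotated matrix
  set E : Matrix (Fin (n + 1)) (Fin (n + 1)) F := B.submatrix (finRotate (n + 1)) id with hE
  have hElast : ∀ j, E (Fin.last n) j = ξ j := by
    intro j
    simp [hE, Matrix.submatrix_apply, finRotate_succ_apply, hB]
  have hEother : ∀ (i : Fin (n + 1)) (j), i ≠ Fin.last n → E i j = ξ j ^ q ^ ((i : ℕ) + 1) := by
    intro i j hi
    have hlt : i < Fin.last n := lt_of_le_of_ne (Fin.le_last i) hi
    simp only [hE, Matrix.submatrix_apply, finRotate_succ_apply, id, hB]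
    congr 2
    exact Fin.val_add_one_of_lt hlt
  -- coefficients of the linear combination
  set c : Fin (n + 1) → F := fun i =>
    if i = Fin.last n then -θ / k (n + 1) else -k ((i : ℕ) + 1) / k (n + 1) with hc
  have key : B.map f = E.updateRow (Fin.last n) (∑ i, c i • E i) := by
    ext i j
    by_cases hi : i = Fin.last n
    · subst hi
      rw [Matrix.updateRow_self]
      have hq0 : (B.map f) (Fin.last n) j = ξ j ^ q ^ (n + 1) := by
        simp only [Matrix.map_apply, hfx, hB, Fin.val_last, ← pow_mul, ← pow_succ]
      rw [hq0]
      have hsum : (∑ i, c i • E i) j = ∑ i, c i * E i j := by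
        simp [Finset.sum_apply]
      rw [hsum, Fin.sum_univ_castSucc]
      have hlastterm : c (Fin.last n) * E (Fin.last n) j = -θ / k (n + 1) * ξ j := by
        rw [hElast, hc]; simp
      have hterm : ∀ i : Fin n, c i.castSucc * E i.castSucc j
          = -k ((i : ℕ) + 1) / k (n + 1) * ξ j ^ q ^ ((i : ℕ) + 1) := by
        intro i
        have hne : i.castSucc ≠ Fin.last n := (Fin.castSucc_lt_last i).ne
        rw [hEother _ _ hne]
        simp [hc, hne, Fin.coe_castSucc]
      -- use the torsion relation
      have htj := htor j
      rw [Finset.sum_Icc_succ_top (Nat.le_add_left 1 n)] at htj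
      have hIcc : ∑ i ∈ Finset.Icc 1 n, k i * ξ j ^ q ^ i
          = ∑ i : Fin n, k ((i : ℕ) + 1) * ξ j ^ q ^ ((i : ℕ) + 1) := by
        rw [← Finset.Ico_add_one_right_eq_Icc, Finset.sum_Ico_eq_sum_range, Fin.sum_univ_eq_sum_range
          (fun i => k (i + 1) * ξ j ^ q ^ (i + 1)) n]
        exact Finset.sum_congr rfl fun i _ => by rw [Nat.add_comm]
      rw [hIcc] at htj
      -- htj : θ * ξ j + ∑ i, k (i+1) * ξ j ^ q^(i+1) + k (n+1) * ξ j ^ q^(n+1) = 0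
      have hkn : k (n + 1) ≠ 0 := hkr
      simp only [hterm, hlastterm]
      apply mul_left_cancel₀ hkn
      rw [mul_add, Finset.mul_sum]
      have h1 : ∀ i : Fin n, k (n + 1) * (-k ((i : ℕ) + 1) / k (n + 1) * ξ j ^ q ^ ((i : ℕ) + 1))
          = -(k ((i : ℕ) + 1) * ξ j ^ q ^ ((i : ℕ) + 1)) := by
        intro i; field_simp
      have h2 : k (n + 1) * (-θ / k (n + 1) * ξ j) = -(θ * ξ j) := by field_simp
      simp only [h1, h2, Finset.sum_neg_distrib]
      linear_combination htj
    · rw [Matrix.updateRow_ne hi, Matrix.map_apply, hfx, hB, hEother i j hi, ← pow_mul, ← pow_succ]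
  have hdet1 : f B.det = (B.map f).det := RingHom.map_det f B
  have hdet2 : (B.map f).det = c (Fin.last n) * E.det := by
    rw [key, Matrix.det_updateRow_sum]; ring_nf
  have hdet3 : E.det = ((-1 : F) ^ n) * B.det := by
    rw [hE, Matrix.det_permute, sign_finRotate]
    push_cast
    ring
  have : B.det ^ q = (-θ / k (n + 1)) * ((-1 : F) ^ n * B.det) := by
    rw [← hfx, hdet1, hdet2, hdet3, hc]; simp
  rw [this, pow_succ]
  ring
end

section
/- Let φ_θ(z) = θz + k_1 z^q + ⋯ + k_r z^{q^r} with |k_i| ≤ 1 for 1 ≤ i ≤ r−1 and k_r ∈ F_q^×, and let ξ_1,…,ξ_r be an F_q-basis of the space of roots of φ_θ in C∞. Then the Moore matrix B = (ξ_j^{q^{i−1}}) satisfies |det(B)| = q^{1/(q−1)}. -/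
/-- If `ξ_1,…,ξ_r` is an `F_q`-basis of the roots of
`φ_θ(z) = θz + k_1 z^q + ⋯ + k_r z^{q^r}` (with `|k_i| ≤ 1` for `i < r` and
`k_r ∈ F_q^×`, i.e. `k_r ≠ 0` and `k_r^q = k_r`), then the Moore matrix
`B = (ξ_j^{q^{i−1}})` satisfies `|det B| = q^{1/(q−1)}`. -/
theorem stmt5 {F : Type*} [Field F] (p m q r : ℕ) [Fact p.Prime] [CharP F p]
    (hm : 0 < m) (hq : q = p ^ m) (hr : 0 < r)
    (v : AbsoluteValue F ℝ) (hna : ∀ x y : F, v (x + y) ≤ max (v x) (v y))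
    (θ : F) (hθ : v θ = q)
    (k : ℕ → F) (hk : ∀ i, 1 ≤ i → i ≤ r - 1 → v (k i) ≤ 1)
    (hkr : k r ≠ 0) (hkrq : k r ^ q = k r)
    (ξ : Fin r → F)
    (hroot : ∀ j, θ * ξ j + ∑ i ∈ Finset.Icc 1 r, k i * ξ j ^ q ^ i = 0)
    (hind : ∀ c : Fin r → F, (∀ j, c j ^ q = c j) →
      ∑ j, c j * ξ j = 0 → ∀ j, c j = 0)
    (B : Matrix (Fin r) (Fin r) F)
    (hB : ∀ i j, B i j = ξ j ^ q ^ (i : ℕ)) :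
    v B.det = (q : ℝ) ^ (1 / ((q : ℝ) - 1)) := by
  classical
  obtain ⟨n, rfl⟩ := Nat.exists_eq_succ_of_ne_zero hr.ne'
  have hp : p.Prime := Fact.out
  have hq2 : 1 < q := by
    rw [hq]; exact Nat.one_lt_pow hm.ne' hp.one_lt
  -- the Frobenius x ↦ x ^ q is a ring hom
  set f : F →+* F := iterateFrobenius F p m with hfdef
  have hf : ∀ x : F, f x = x ^ q := by
    intro x; rw [hfdef, iterateFrobenius_def, hq]
  -- θ ≠ 0
  have hθ0 : θ ≠ 0 := by
    intro h
    rw [h, v.map_zero] at hθ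
    have : q = 0 := by exact_mod_cast hθ.symm
    omega
  -- v (k r) = 1
  have hvkr : v (k (n+1)) = 1 := by
    set x := v (k (n+1)) with hx
    have h2 : 0 < x := v.pos hkr
    have h1 : x ^ q = x := by rw [hx, ← map_pow, hkrq]
    rcases lt_trichotomy x 1 with h | h | h
    · have h3 : x ^ q < x ^ 1 := pow_lt_pow_right_of_lt_one₀ h2 h hq2
      rw [h1, pow_one] at h3; linarith
    · exact h
    · have h3 : x ^ 1 < x ^ q := pow_lt_pow_right₀ h hq2
      rw [h1, pow_one] at h3; linarith
  -- the root relation, solved for the top power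
  have hxr : ∀ j, ξ j ^ q ^ (n+1) =
      (-(θ * (k (n+1))⁻¹)) * ξ j
        + ∑ t ∈ Finset.range n, (-(k (t+1) * (k (n+1))⁻¹)) * ξ j ^ q ^ (t+1) := by
    intro j
    have h0 := hroot j
    rw [show Finset.Icc 1 (n+1) = insert (n+1) (Finset.Icc 1 n) by
      ext t; simp only [Finset.mem_Icc, Finset.mem_insert]; omega] at h0
    rw [Finset.sum_insert (by simp)] at h0
    have hs : ∑ i ∈ Finset.Icc 1 n, k i * ξ j ^ q ^ i
        = ∑ t ∈ Finset.range n, k (t+1) * ξ j ^ q ^ (t+1) := by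
      rw [← Finset.Ico_add_one_right_eq_Icc, Finset.sum_Ico_eq_sum_range]
      apply Finset.sum_congr rfl
      intro t _
      rw [add_comm 1 t]
    rw [hs] at h0
    set S := ∑ t ∈ Finset.range n, k (t+1) * ξ j ^ q ^ (t+1) with hSdef
    have hkinv : k (n+1) * (k (n+1))⁻¹ = 1 := mul_inv_cancel₀ hkr
    have hS : ∑ t ∈ Finset.range n, (-(k (t+1) * (k (n+1))⁻¹)) * ξ j ^ q ^ (t+1)
        = -((k (n+1))⁻¹ * S) := by
      rw [hSdef, Finset.mul_sum, ← Finset.sum_neg_distrib]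
      apply Finset.sum_congr rfl
      intro t _
      ring
    rw [hS]
    apply mul_left_cancel₀ hkr
    linear_combination h0 + (θ * ξ j + S) * hkinv
  -- the space of linear relations among the rows
  set P : (Fin (n+1) → F) → Prop :=
    fun c => ∀ i : Fin (n+1), ∑ j, c j * ξ j ^ q ^ (i : ℕ) = 0 with hPdef
  have hstep : ∀ c, P c → ∀ t, t ≤ n → ∑ j, (c j) ^ q * ξ j ^ q ^ (t+1) = 0 := by
    intro c hc t ht
    have h0 : ∑ j, c j * ξ j ^ q ^ t = 0 := hc ⟨t, by omega⟩
    have : f (∑ j, c j * ξ j ^ q ^ t) = 0 := by rw [h0, map_zero]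
    rw [map_sum] at this
    calc ∑ j, (c j) ^ q * ξ j ^ q ^ (t+1)
        = ∑ j, f (c j * ξ j ^ q ^ t) := by
          apply Finset.sum_congr rfl
          intro j _
          rw [map_mul, hf, hf, ← pow_mul, ← pow_succ]
      _ = 0 := this
  have hPfrob : ∀ c, P c → P (fun j => (c j) ^ q) := by
    intro c hc i
    rcases i with ⟨iv, hiv⟩
    match iv, hiv with
    | (t+1), hiv => exact hstep c hc t (by omega)
    | 0, hiv =>
      simp only
      have h1 : ∑ j, (c j) ^ q * ξ j ^ q ^ (n+1) = 0 := hstep c hc n le_rfl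
      have h2 : ∑ j, (c j) ^ q * ξ j ^ q ^ (n+1)
          = (-(θ * (k (n+1))⁻¹)) * ∑ j, (c j) ^ q * ξ j
            + ∑ t ∈ Finset.range n,
                (-(k (t+1) * (k (n+1))⁻¹)) * ∑ j, (c j) ^ q * ξ j ^ q ^ (t+1) := by
        calc ∑ j, (c j) ^ q * ξ j ^ q ^ (n+1)
            = ∑ j, ((-(θ * (k (n+1))⁻¹)) * ((c j) ^ q * ξ j)
                + ∑ t ∈ Finset.range n,
                    (-(k (t+1) * (k (n+1))⁻¹)) * ((c j) ^ q * ξ j ^ q ^ (t+1))) := by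
              apply Finset.sum_congr rfl
              intro j _
              rw [hxr j, mul_add, Finset.mul_sum]
              congr 1
              · ring
              · exact Finset.sum_congr rfl fun t _ => by ring
          _ = _ := by
              rw [Finset.sum_add_distrib, ← Finset.mul_sum, Finset.sum_comm]
              congr 1
              exact Finset.sum_congr rfl fun t _ => (Finset.mul_sum _ _ _).symm
      have h3 : ∀ t ∈ Finset.range n,
          (-(k (t+1) * (k (n+1))⁻¹)) * ∑ j, (c j) ^ q * ξ j ^ q ^ (t+1) = 0 := by
        intro t htn
        rw [hstep c hc t (by simp at htn; omega), mul_zero]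
      rw [Finset.sum_congr rfl h3, Finset.sum_const_zero, add_zero] at h2
      rw [h2] at h1
      have ha0 : (-(θ * (k (n+1))⁻¹)) ≠ 0 := by
        simp only [neg_ne_zero]
        exact mul_ne_zero hθ0 (inv_ne_zero hkr)
      have h4 : ∑ j, (c j) ^ q * ξ j = 0 := by
        rcases mul_eq_zero.mp h1 with h | h
        · exact absurd h ha0
        · exact h
      simpa using h4
  -- only the zero relation exists
  have hmain : ∀ N (c : Fin (n+1) → F), P c →
      (Finset.univ.filter (fun j => c j ≠ 0)).card ≤ N → ∀ j, c j = 0 := by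
    intro N
    induction N with
    | zero =>
      intro c _ hcard j
      by_contra hj
      have : j ∈ Finset.univ.filter (fun j => c j ≠ 0) := by simp [hj]
      have := Finset.card_pos.mpr ⟨j, this⟩
      omega
    | succ N ih =>
      intro c hc hcard
      by_contra hcon
      push_neg at hcon
      obtain ⟨j0, hj0⟩ := hcon
      set e : Fin (n+1) → F := fun j => c j0 ^ q * c j - c j0 * (c j) ^ q with hedef
      have hPe : P e := by
        intro i
        have h1 := hc i
        have h2 := hPfrob c hc i
        simp only [hedef, sub_mul, mul_assoc, Finset.sum_sub_distrib, ← Finset.mul_sum]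
        rw [h1, h2, mul_zero, mul_zero, sub_zero]
      have hsub : (Finset.univ.filter (fun j => e j ≠ 0)) ⊆
          (Finset.univ.filter (fun j => c j ≠ 0)).erase j0 := by
        intro j hj
        simp only [Finset.mem_filter, Finset.mem_univ, true_and] at hj
        rw [Finset.mem_erase]
        constructor
        · intro h
          apply hj
          rw [hedef, h]; ring
        · simp only [Finset.mem_filter, Finset.mem_univ, true_and]
          intro h
          apply hj
          show c j0 ^ q * c j - c j0 * c j ^ q = 0
          rw [h]
          simp [zero_pow (show q ≠ 0 by omega)]
      have hj0mem : j0 ∈ Finset.univ.filter (fun j => c j ≠ 0) := by simp [hj0]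
      have hcard' : (Finset.univ.filter (fun j => e j ≠ 0)).card ≤ N := by
        have := Finset.card_le_card hsub
        rw [Finset.card_erase_of_mem hj0mem] at this
        omega
      have he0 := ih e hPe hcard'
      set b : Fin (n+1) → F := fun j => c j * (c j0)⁻¹ with hbdef
      have hbq : ∀ j, b j ^ q = b j := by
        intro j
        have hej := he0 j
        simp only [hedef] at hej
        have hcq : (c j) ^ q = c j0 ^ q * c j * (c j0)⁻¹ := by
          field_simp
          linear_combination -hej
        simp only [hbdef, mul_pow, inv_pow, hcq]
        field_simp
      have hb0 : ∑ j, b j * ξ j = 0 := by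
        have h0 : ∑ j, c j * ξ j = 0 := by
          have := hc ⟨0, by omega⟩
          simpa using this
        simp only [hbdef]
        calc ∑ j, c j * (c j0)⁻¹ * ξ j = (c j0)⁻¹ * ∑ j, c j * ξ j := by
              rw [Finset.mul_sum]; apply Finset.sum_congr rfl; intro j _; ring
          _ = 0 := by rw [h0, mul_zero]
      have := hind b hbq hb0 j0
      simp only [hbdef] at this
      rw [mul_inv_cancel₀ hj0] at this
      exact one_ne_zero this
  -- hence B is nonsingular
  have hdet0 : B.det ≠ 0 := by
    intro h0
    rw [← Matrix.exists_mulVec_eq_zero_iff] at h0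
    obtain ⟨c, hc0, hmul⟩ := h0
    have hPc : P c := by
      intro i
      have := congrFun hmul i
      simp only [Matrix.mulVec, dotProduct, Pi.zero_apply] at this
      calc ∑ j, c j * ξ j ^ q ^ (i:ℕ) = ∑ j, B i j * c j := by
            apply Finset.sum_congr rfl; intro j _; rw [hB]; ring
        _ = 0 := this
    exact hc0 (funext (hmain _ c hPc le_rfl))
  -- the Frobenius twist identity for the Moore determinant
  set M : Matrix (Fin (n+1)) (Fin (n+1)) F := B.submatrix (finRotate (n+1)) id with hMdef
  set d : Fin (n+1) → F := fun i =>
    if i = Fin.last n then -(θ * (k (n+1))⁻¹) else -(k ((i:ℕ)+1) * (k (n+1))⁻¹) with hddef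
  have hC : B.map f = M.updateRow (Fin.last n) (∑ i, d i • M i) := by
    funext i j
    by_cases hi : i = Fin.last n
    · subst hi
      rw [Matrix.map_apply, Matrix.updateRow_self]
      have hlhs : f (B (Fin.last n) j) = ξ j ^ q ^ (n+1) := by
        rw [hB, hf, ← pow_mul, ← pow_succ]
        rfl
      rw [hlhs, hxr j]
      have hsum : (∑ i, d i • M i) j = ∑ i, d i * M i j := by
        simp [Finset.sum_apply]
      rw [hsum, Fin.sum_univ_castSucc]
      have hlast : d (Fin.last n) * M (Fin.last n) j = (-(θ * (k (n+1))⁻¹)) * ξ j := by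
        rw [hddef, hMdef]
        simp only [if_pos rfl, Matrix.submatrix_apply, id_eq]
        rw [hB]
        have : ((finRotate (n+1) (Fin.last n) : Fin (n+1)) : ℕ) = 0 := by
          rw [coe_finRotate, if_pos rfl]
        rw [this, pow_zero, pow_one]
        simp
      rw [hlast, add_comm]
      congr 1
      have hterm : ∀ i : Fin n, d i.castSucc • M i.castSucc j
          = (-(k ((i:ℕ)+1) * (k (n+1))⁻¹)) * ξ j ^ q ^ ((i:ℕ)+1) := by
        intro i
        have hne : (i.castSucc : Fin (n+1)) ≠ Fin.last n := (Fin.castSucc_lt_last i).ne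
        rw [hddef, hMdef]
        simp only [if_neg hne, Matrix.submatrix_apply, id_eq, smul_eq_mul]
        rw [hB, coe_finRotate, if_neg hne, Fin.coe_castSucc]
      calc ∑ t ∈ Finset.range n, (-(k (t+1) * (k (n+1))⁻¹)) * ξ j ^ q ^ (t+1)
          = ∑ i : Fin n, (-(k ((i:ℕ)+1) * (k (n+1))⁻¹)) * ξ j ^ q ^ ((i:ℕ)+1) :=
            (Fin.sum_univ_eq_sum_range _ n).symm
        _ = ∑ i : Fin n, d i.castSucc • M i.castSucc j :=
            Finset.sum_congr rfl (fun i _ => (hterm i).symm)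
    · rw [Matrix.map_apply, Matrix.updateRow_ne hi, hMdef]
      simp only [Matrix.submatrix_apply, id_eq]
      rw [hB, hB, hf, ← pow_mul, ← pow_succ, coe_finRotate, if_neg hi]
  -- determinant of the permuted matrix
  have hMdet : M.det = ((-1 : F)) ^ n * B.det := by
    rw [hMdef, Matrix.det_permute, sign_finRotate]
    norm_num
  have hdetmap : B.det ^ q = d (Fin.last n) * M.det := by
    rw [← hf B.det, RingHom.map_det, RingHom.mapMatrix_apply, hC, Matrix.det_updateRow_sum, smul_eq_mul]
  have hdlast : d (Fin.last n) = -(θ * (k (n+1))⁻¹) := by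
    rw [hddef]; simp
  have hkey : B.det ^ q = (-(θ * (k (n+1))⁻¹)) * (((-1 : F)) ^ n * B.det) := by
    rw [hdetmap, hMdet, hdlast]
  -- pass to absolute values
  have hvkinv : v ((k (n+1))⁻¹) = 1 := by
    have h := v.map_mul (k (n+1)) (k (n+1))⁻¹
    rw [mul_inv_cancel₀ hkr, v.map_one, hvkr, one_mul] at h
    exact h.symm
  have hvneg1 : v ((-1 : F) ^ n) = 1 := by
    rw [v.map_pow, v.map_neg, v.map_one, one_pow]
  set x := v B.det with hxdef
  have hxpos : 0 < x := v.pos hdet0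
  have hxq : x ^ q = (q : ℝ) * x := by
    have h := congrArg v hkey
    rw [v.map_pow, v.map_mul, v.map_mul, v.map_neg, v.map_mul, hvkinv, hvneg1, hθ] at h
    rw [h]; ring
  have hx2 : x ^ (q - 1) = (q : ℝ) := by
    have h1 : x ^ (q - 1) * x = (q : ℝ) * x := by
      rw [← pow_succ, show q - 1 + 1 = q by omega]
      exact hxq
    exact mul_right_cancel₀ hxpos.ne' h1
  have hq1R : (1 : ℝ) < (q : ℝ) := by exact_mod_cast hq2
  have hc0 : ((q : ℝ) - 1) ≠ 0 := by linarith
  have hcast : (((q - 1 : ℕ)) : ℝ) = (q : ℝ) - 1 := by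
    rw [Nat.cast_sub (by omega), Nat.cast_one]
  have hxc : x ^ ((q : ℝ) - 1) = (q : ℝ) := by
    rw [← hcast, Real.rpow_natCast, hx2]
  calc x = (x ^ ((q : ℝ) - 1)) ^ (1 / ((q : ℝ) - 1)) := by
        rw [← Real.rpow_mul hxpos.le, mul_one_div_cancel hc0, Real.rpow_one]
    _ = (q : ℝ) ^ (1 / ((q : ℝ) - 1)) := by rw [hxc]
end

section
/- Let ξ_1,…,ξ_r be elements of a perfect field of characteristic p containing F_q, and let B be the r×r Moore matrix with entries B_{ij} = ξ_j^{q^{i−1}}. For 1 ≤ i,j ≤ r let c_{ij} denote the (i,j)-cofactor of B (so that B^{−1} = (1/det B)(c_{ji}) when B is invertible). Then for every 1 ≤ ℓ ≤ r one has c_{1ℓ} = (−1)^{r−1} · (c_{rℓ})^q. -/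
/-- For the Moore matrix `B = (ξ_j^{q^{i−1}})` of size `r = n+1` over a perfect
field of characteristic `p` containing `F_q`, the cofactors satisfy
`c_{1ℓ} = (−1)^{r−1} · (c_{rℓ})^q` for every column `ℓ`. -/
theorem stmt6 {F : Type*} [Field F] (p m q n : ℕ) [Fact p.Prime] [ExpChar F p]
    [PerfectRing F p]
    (hm : 0 < m) (hq : q = p ^ m)
    (ξ : Fin (n + 1) → F)
    (B : Matrix (Fin (n + 1)) (Fin (n + 1)) F)
    (hB : ∀ i j, B i j = ξ j ^ q ^ (i : ℕ))
    (cof : Fin (n + 1) → Fin (n + 1) → F)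
    (hcof : ∀ i j, cof i j = (-1) ^ ((i : ℕ) + (j : ℕ)) *
      (B.submatrix i.succAbove j.succAbove).det) :
    ∀ ℓ, cof 0 ℓ = (-1) ^ n * (cof (Fin.last n) ℓ) ^ q := by
  intro ℓ
  have hfrob : ∀ x : F, x ^ q = iterateFrobenius F p m x := by
    intro x; rw [iterateFrobenius_def, hq]
  have hnegone : (-1 : F) ^ q = -1 := by
    rw [hfrob, map_neg, map_one]
  have key : (B.submatrix (Fin.last n).succAbove ℓ.succAbove).det ^ q
      = (B.submatrix (0 : Fin (n+1)).succAbove ℓ.succAbove).det := by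
    rw [hfrob, RingHom.map_det]
    congr 1
    ext i j
    simp only [RingHom.mapMatrix_apply, Matrix.map_apply, Matrix.submatrix_apply, hB, Fin.succAbove_last,
      Fin.succAbove_zero, ← hfrob, Fin.coe_castSucc, Function.comp_apply, Fin.val_succ]
    rw [← pow_mul, ← pow_succ]
  rw [hcof, hcof, mul_pow, key, ← pow_mul, mul_comm ((Fin.last n : ℕ) + (ℓ : ℕ)) q,
    pow_mul, hnegone]
  simp only [Fin.val_zero, Fin.val_last, zero_add]
  rw [← mul_assoc, ← pow_add]
  congr 1
  rw [show n + (n + (ℓ : ℕ)) = 2 * n + ℓ by ring, pow_add, pow_mul]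
  simp
end

section
/- Let k_1,…,k_r ∈ C∞ with k_r ≠ 0. Define: Θ ∈ Mat_r(C∞[t]) with Θ_{i,i+1} = 1 for 1 ≤ i ≤ r−1, last row ((t−θ)/k_r, −k_1/k_r, …, −k_{r−1}/k_r), all other entries 0; Φ ∈ Mat_r(C∞[t]) with Φ_{i,i+1} = 1 for 1 ≤ i ≤ r−1, last row ((t−θ)/k_r^{(−r)}, −k_1^{(−1)}/k_r^{(−r)}, …, −k_{r−1}^{(−(r−1))}/k_r^{(−r)}), all other entries 0; and V ∈ Mat_r(C∞) the anti-triangular matrix with V_{ij} = k_{i+j−1}^{(1−j)} when i+j ≤ r+1 and V_{ij} = 0 otherwise (so the first row is (k_1, k_2^{(−1)},…,k_r^{(1−r)}) and first column (k_1,…,k_r)^tr). Here x^{(m)} denotes x^{q^m} (using q^m-th roots for m < 0, which exist since C∞ is perfect). Then V^{(−1)} Φ = Θ^tr V, where V^{(−1)} applies the (−1)-twist entrywise. -/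
private lemma iterSymmZero {F : Type*} [Field F] (φ : F ≃+* F) (n : ℕ) :
    (⇑φ.symm)^[n] (0 : F) = 0 := by
  induction n with
  | zero => rfl
  | succ n ih => rw [Function.iterate_succ_apply', ih, map_zero]

/-- The matrices `Θ`, `Φ` and `V` attached to a rank-`r` Drinfeld module satisfy
`V^{(−1)} Φ = Θ^tr V`, where `x^{(−j)}` denotes the inverse Frobenius twist
`φ.symm` iterated `j` times (`φ x = x^q`). -/
theorem stmt8 {F : Type*} [Field F] (p m q r : ℕ) [Fact p.Prime] [CharP F p]
    (hm : 0 < m) (hq : q = p ^ m) (hr : 0 < r)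
    (φ : F ≃+* F) (hφ : ∀ x, φ x = x ^ q)
    (θ : F) (k : ℕ → F) (hkr : k r ≠ 0)
    (Θ Φm : Matrix (Fin r) (Fin r) (Polynomial F))
    (hΘ : ∀ i j : Fin r, Θ i j =
      if (i : ℕ) + 1 < r then (if (j : ℕ) = (i : ℕ) + 1 then 1 else 0)
      else (if (j : ℕ) = 0 then
              Polynomial.C (k r)⁻¹ * (Polynomial.X - Polynomial.C θ)
            else Polynomial.C (-(k (j : ℕ)) / k r)))
    (hΦ : ∀ i j : Fin r, Φm i j =
      if (i : ℕ) + 1 < r then (if (j : ℕ) = (i : ℕ) + 1 then 1 else 0)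
      else (if (j : ℕ) = 0 then
              Polynomial.C ((⇑φ.symm)^[r] (k r))⁻¹ *
                (Polynomial.X - Polynomial.C θ)
            else Polynomial.C
              (-((⇑φ.symm)^[(j : ℕ)] (k (j : ℕ))) / (⇑φ.symm)^[r] (k r))))
    (V : Matrix (Fin r) (Fin r) F)
    (hV : ∀ i j : Fin r, V i j =
      if (i : ℕ) + (j : ℕ) + 1 ≤ r then
        (⇑φ.symm)^[(j : ℕ)] (k ((i : ℕ) + (j : ℕ) + 1))
      else 0) :
    (Matrix.of fun i j => Polynomial.C (φ.symm (V i j))) * Φm =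
      Θ.transpose * (Matrix.of fun i j => Polynomial.C (V i j)) := by
  have hne : (⇑φ.symm)^[r] (k r) ≠ 0 := fun h => hkr
    (Function.Injective.iterate φ.symm.injective r (h.trans (iterSymmZero φ r).symm))
  obtain ⟨n, rfl⟩ : ∃ n, r = n + 1 := ⟨r - 1, (Nat.succ_pred_eq_of_pos hr).symm⟩
  rw [← Matrix.ext_iff]; intro i j
  simp only [Matrix.mul_apply, Matrix.of_apply, Matrix.transpose_apply, hΘ, hΦ, hV]
  rw [Fin.sum_univ_castSucc, Fin.sum_univ_castSucc]
  simp only [Fin.coe_castSucc, Fin.val_last, Fin.is_lt, Nat.add_lt_add_iff_right,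
    if_true, lt_irrefl, if_false, Fin.isValue]
  rcases Fin.eq_zero_or_eq_succ i with rfl | ⟨i', rfl⟩ <;>
    rcases Fin.eq_zero_or_eq_succ j with rfl | ⟨j', rfl⟩
  · simp only [Fin.val_zero, Nat.zero_add, Nat.right_eq_add, Nat.succ_ne_zero, Nat.zero_ne_add_one,
      if_false, if_true, mul_zero, Finset.sum_const_zero, zero_add, le_refl,
      Nat.add_le_add_iff_right, Nat.le_refl, ite_true, Nat.zero_le]
    rw [← Function.iterate_succ_apply' φ.symm]
    simp only [zero_mul, Finset.sum_const_zero, zero_add, Function.iterate_zero, id_eq,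
      Nat.add_zero]
    rw [← mul_assoc, ← Polynomial.C_mul, mul_inv_cancel₀ hne, Polynomial.C_1, one_mul,
      mul_right_comm, ← Polynomial.C_mul, inv_mul_cancel₀ hkr, Polynomial.C_1, one_mul]
  · simp only [Fin.val_succ, Fin.val_zero, Nat.zero_add, Nat.add_le_add_iff_right,
      Fin.is_le, if_true, Nat.succ_ne_zero, if_false, Nat.add_right_cancel_iff,
      Fin.val_eq_val, mul_ite, mul_one, mul_zero, zero_mul, Finset.sum_const_zero,
      zero_add, add_zero, Finset.sum_ite_eq, Finset.mem_univ, Nat.zero_ne_add_one,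
      le_refl, add_le_iff_nonpos_right, Nat.le_zero, Fin.is_le', Polynomial.C_0]
    rw [← Function.iterate_succ_apply' φ.symm, ← Function.iterate_succ_apply' φ.symm,
      ← Polynomial.C_mul, mul_comm ((⇑φ.symm)^[n + 1] (k (n + 1))), div_mul_cancel₀ _ hne,
      ← Polynomial.C_add, add_neg_cancel, Polynomial.C_0]
  · simp only [Fin.val_succ, Fin.val_zero, Nat.add_le_add_iff_right,
      Fin.is_le, if_true, Nat.succ_ne_zero, if_false, Nat.add_right_cancel_iff,
      Fin.val_eq_val, mul_ite, mul_one, mul_zero, zero_mul, Finset.sum_const_zero,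
      zero_add, add_zero, Finset.sum_ite_eq, Finset.mem_univ, Nat.zero_ne_add_one,
      le_refl, add_le_iff_nonpos_right, Nat.le_zero, Fin.is_le', Polynomial.C_0,
      Nat.add_zero, map_zero, add_le_iff_nonpos_left, ite_mul, one_mul,
      Function.iterate_zero, id_eq]
    rw [← Polynomial.C_mul, div_mul_cancel₀ _ hkr, ← Polynomial.C_add, add_neg_cancel,
      Polynomial.C_0]
  · simp only [Fin.val_succ, Nat.add_le_add_iff_right,
      Fin.is_le, if_true, Nat.succ_ne_zero, if_false, Nat.add_right_cancel_iff,
      Fin.val_eq_val, mul_ite, mul_one, mul_zero, zero_mul, Finset.sum_const_zero,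
      zero_add, add_zero, Finset.sum_ite_eq, Finset.mem_univ, Nat.zero_ne_add_one,
      le_refl, add_le_iff_nonpos_right, add_le_iff_nonpos_left, Nat.le_zero,
      Fin.is_le', Polynomial.C_0, Nat.add_zero, map_zero, ite_mul, one_mul]
    rw [apply_ite φ.symm, map_zero, ← Function.iterate_succ_apply' φ.symm,
      show (i' : ℕ) + 1 + (j' : ℕ) = (i' : ℕ) + ((j' : ℕ) + 1) by omega]
end

section
/- Let T denote the Tate algebra of power series Σ a_i t^i with a_i ∈ C∞ and |a_i| → 0, with Gauss norm. Fix γ ∈ C∞ with γ^{q−1} = −θ. Then the infinite product ∏_{j=0}^{∞} (1 − t/θ^{q^j})^{−1} converges in T, and ω := γ · ∏_{j=0}^{∞} (1 − t/θ^{q^j})^{−1} satisfies ω^{(1)} = (t − θ)·ω, where ω^{(1)} is obtained by raising every coefficient of ω to the q-th power. -/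
open PowerSeries Filter

theorem aux_sum {F : Type*} [NormedField F]
    (hna : ∀ x y : F, ‖x + y‖ ≤ max ‖x‖ ‖y‖) {α : Type*} (s : Finset α) (f : α → F)
    {C : ℝ} (hC : 0 ≤ C) (h : ∀ a ∈ s, ‖f a‖ ≤ C) : ‖∑ a ∈ s, f a‖ ≤ C := by
  induction s using Finset.cons_induction with
  | empty => simpa using hC
  | cons a s ha ih =>
    rw [Finset.sum_cons]
    exact le_trans (hna _ _) (max_le (h a (Finset.mem_cons_self a s))
      (ih fun b hb => h b (Finset.mem_cons_of_mem hb)))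

/-- The partial products `P_N = γ·∏_{j<N}(1 − t/θ^{q^j})^{−1}` converge in the
Tate algebra (uniformly in the coefficients, i.e. in the Gauss norm) to the
Anderson–Thakur function `ω`, whose coefficients tend to zero, and `ω`
satisfies `ω^{(1)} = (t − θ)·ω` coefficientwise. -/
theorem stmt9 {F : Type*} [NormedField F] [CompleteSpace F]
    (hna : ∀ x y : F, ‖x + y‖ ≤ max ‖x‖ ‖y‖)
    (p m q : ℕ) [Fact p.Prime] [CharP F p] (hm : 0 < m) (hq : q = p ^ m)
    (θ : F) (hθ : ‖θ‖ = q)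
    (γ : F) (hγ : γ ^ (q - 1) = -θ)
    (P : ℕ → PowerSeries F)
    (hP : ∀ N, P N = PowerSeries.C γ *
      ∏ j ∈ Finset.range N, PowerSeries.mk fun i => ((θ ^ q ^ j)⁻¹) ^ i) :
    ∃ ω : ℕ → F,
      Filter.Tendsto (fun i => ‖ω i‖) Filter.atTop (nhds 0) ∧
      (∀ ε : ℝ, 0 < ε → ∃ N₀, ∀ N ≥ N₀, ∀ i,
        ‖PowerSeries.coeff i (P N) - ω i‖ < ε) ∧
      (∀ i, (ω i) ^ q = (if i = 0 then 0 else ω (i - 1)) - θ * ω i) := by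
  -- basic facts
  have hp2 : 2 ≤ p := (Fact.out : p.Prime).two_le
  have hq2 : 2 ≤ q := hq ▸ le_trans hp2 (Nat.le_self_pow hm.ne' p)
  have hq1 : 1 ≤ q := by omega
  have hqR : (1:ℝ) < (q:ℝ) := by exact_mod_cast by omega
  have hθ0 : θ ≠ 0 := by
    intro h; rw [h, norm_zero] at hθ; exact absurd hθ.symm (by positivity)
  set r : ℝ := ((q:ℝ))⁻¹ with hr
  have hr0 : 0 ≤ r := by positivity
  have hr1 : r < 1 := inv_lt_one_of_one_lt₀ hqR
  set G : ℝ := ‖γ‖ with hG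
  have hG0 : 0 ≤ G := norm_nonneg _
  set fct : ℕ → PowerSeries F := fun j => PowerSeries.mk fun i => ((θ ^ q ^ j)⁻¹) ^ i with hfct
  -- norm of coefficients of factors
  have hfnorm : ∀ j i, ‖PowerSeries.coeff i (fct j)‖ = r ^ (q ^ j * i) := by
    intro j i
    simp only [hfct, coeff_mk, norm_pow, norm_inv, norm_pow, hθ]
    rw [← inv_pow, ← pow_mul]
  have hPsucc : ∀ N, P (N + 1) = P N * fct N := by
    intro N
    rw [hP, hP, Finset.prod_range_succ, mul_assoc]
  -- coefficient bound
  have hbound : ∀ N i, ‖PowerSeries.coeff i (P N)‖ ≤ G * r ^ i := by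
    intro N
    induction N with
    | zero =>
      intro i
      rw [hP]
      simp only [Finset.range_zero, Finset.prod_empty, mul_one, coeff_C]
      split
      · next h => subst h; simp [hG]
      · simp only [norm_zero]; positivity
    | succ N ih =>
      intro i
      rw [hPsucc, coeff_mul]
      refine aux_sum hna _ _ (by positivity) ?_
      rintro ⟨a, b⟩ hab
      rw [Finset.HasAntidiagonal.mem_antidiagonal] at hab
      rw [norm_mul, hfnorm]
      calc ‖(coeff a) (P N)‖ * r ^ (q ^ N * b)
          ≤ (G * r ^ a) * r ^ b := by
            apply mul_le_mul (ih a) (pow_le_pow_of_le_one hr0 hr1.le ?_)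
              (by positivity) (by positivity)
            exact Nat.le_mul_of_pos_left b (Nat.pow_pos (n := N) (by omega))
        _ = G * r ^ i := by rw [mul_assoc, ← pow_add, hab]
  -- Cauchy step
  have hstep : ∀ N i, ‖PowerSeries.coeff i (P (N+1)) - PowerSeries.coeff i (P N)‖
      ≤ G * r ^ q ^ N := by
    intro N i
    have : PowerSeries.coeff i (P (N+1)) - PowerSeries.coeff i (P N)
        = PowerSeries.coeff i (P N * (fct N - 1)) := by
      rw [mul_sub, mul_one, ← hPsucc, map_sub]
    rw [this, coeff_mul]
    refine aux_sum hna _ _ (by positivity) ?_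
    rintro ⟨a, b⟩ hab
    rw [Finset.HasAntidiagonal.mem_antidiagonal] at hab
    rcases Nat.eq_zero_or_pos b with hb | hb
    · subst hb
      have : PowerSeries.coeff 0 (fct N - 1) = 0 := by
        simp [hfct, coeff_zero_eq_constantCoeff]
      simp [this, mul_nonneg hG0 (pow_nonneg hr0 _)]
    · have hcb : PowerSeries.coeff b (fct N - 1) = PowerSeries.coeff b (fct N) := by
        rw [map_sub]
        have : PowerSeries.coeff b (1 : PowerSeries F) = 0 := by
          rw [PowerSeries.coeff_one]; simp [Nat.pos_iff_ne_zero.mp hb]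
        rw [this, sub_zero]
      rw [norm_mul, hcb, hfnorm]
      calc ‖(coeff a) (P N)‖ * r ^ (q ^ N * b)
          ≤ (G * r ^ a) * r ^ q ^ N := by
            apply mul_le_mul (hbound N a) (pow_le_pow_of_le_one hr0 hr1.le ?_)
              (by positivity) (by positivity)
            exact Nat.le_mul_of_pos_right (q ^ N) hb
        _ = r ^ a * (G * r ^ q ^ N) := by ring
        _ ≤ 1 * (G * r ^ q ^ N) :=
            mul_le_mul_of_nonneg_right (pow_le_one₀ hr0 hr1.le) (by positivity)
        _ = G * r ^ q ^ N := one_mul _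
  -- general Cauchy estimate
  have hcauchy : ∀ N M i, N ≤ M →
      ‖PowerSeries.coeff i (P M) - PowerSeries.coeff i (P N)‖ ≤ G * r ^ q ^ N := by
    intro N M i hNM
    induction M, hNM using Nat.le_induction with
    | base => simp [mul_nonneg hG0 (pow_nonneg hr0 _)]
    | succ M hNM ih =>
      have h1 : (coeff i) (P (M+1)) - (coeff i) (P N)
          = ((coeff i) (P (M+1)) - (coeff i) (P M))
            + ((coeff i) (P M) - (coeff i) (P N)) := by ring
      rw [h1]
      refine le_trans (hna _ _) (max_le (le_trans (hstep M i) ?_) ih)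
      have : r ^ q ^ M ≤ r ^ q ^ N :=
        pow_le_pow_of_le_one hr0 hr1.le (Nat.pow_le_pow_right (by omega) hNM)
      nlinarith
  -- the bound tends to 0
  have hb0 : Tendsto (fun N => G * r ^ q ^ N) atTop (nhds 0) := by
    have h1 : Tendsto (fun n : ℕ => r ^ n) atTop (nhds 0) :=
      tendsto_pow_atTop_nhds_zero_of_lt_one hr0 hr1
    have h2 : Tendsto (fun N : ℕ => q ^ N) atTop atTop :=
      tendsto_pow_atTop_atTop_of_one_lt (by omega)
    simpa using (h1.comp h2).const_mul G
  -- existence of limit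
  have hex : ∀ i, ∃ x : F, Tendsto (fun N => PowerSeries.coeff i (P N)) atTop (nhds x) := by
    intro i
    apply cauchySeq_tendsto_of_complete
    apply cauchySeq_of_le_tendsto_0 (fun N => G * r ^ q ^ N) _ hb0
    intro n M N hn hM
    have h1 : (coeff i) (P n) - (coeff i) (P M)
        = ((coeff i) (P n) - (coeff i) (P N))
          + -((coeff i) (P M) - (coeff i) (P N)) := by ring
    rw [dist_eq_norm, h1]
    refine le_trans (hna _ _) (max_le (hcauchy N n i hn) ?_)
    rw [norm_neg]; exact hcauchy N M i hM
  choose ω hω using hex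
  refine ⟨ω, ?_, ?_, ?_⟩
  · -- coefficients tend to 0
    have hωb : ∀ i, ‖ω i‖ ≤ G * r ^ i := fun i =>
      le_of_tendsto ((hω i).norm) (Filter.Eventually.of_forall fun N => hbound N i)
    have h1 : Tendsto (fun i : ℕ => G * r ^ i) atTop (nhds 0) := by
      simpa using (tendsto_pow_atTop_nhds_zero_of_lt_one hr0 hr1).const_mul G
    exact squeeze_zero (fun i => norm_nonneg _) hωb h1
  · -- uniform convergence
    intro ε hε
    obtain ⟨N₀, hN₀⟩ := (Filter.eventually_atTop).mp (hb0.eventually (gt_mem_nhds hε))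
    refine ⟨N₀, fun N hN i => ?_⟩
    have hle : ‖PowerSeries.coeff i (P N) - ω i‖ ≤ G * r ^ q ^ N := by
      have h1 : Tendsto (fun M => ‖PowerSeries.coeff i (P N) - PowerSeries.coeff i (P M)‖)
          atTop (nhds ‖PowerSeries.coeff i (P N) - ω i‖) :=
        ((tendsto_const_nhds.sub (hω i)).norm)
      refine le_of_tendsto h1 ?_
      filter_upwards [Filter.eventually_ge_atTop N] with M hM
      rw [norm_sub_rev]; exact hcauchy N M i hM
    exact lt_of_le_of_lt hle (hN₀ N hN)
  · -- functional equation
    set φ : F →+* F := iterateFrobenius F p m with hφ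
    have hφdef : ∀ x : F, φ x = x ^ q := fun x => by
      rw [hφ, iterateFrobenius_def, ← hq]
    have hmapf : ∀ j, PowerSeries.map φ (fct j) = fct (j + 1) := by
      intro j
      ext i
      simp only [PowerSeries.coeff_map, hfct, coeff_mk, hφdef]
      rw [← pow_mul, ← inv_pow, ← inv_pow, ← pow_mul, ← pow_mul]
      ring_nf
    have hfct0 : (PowerSeries.X - PowerSeries.C θ) * fct 0 = PowerSeries.C (-θ) := by
      ext n
      rw [sub_mul, map_sub]
      cases n with
      | zero =>
        simp [hfct, coeff_zero_eq_constantCoeff, map_mul]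
      | succ n =>
        rw [coeff_succ_X_mul, coeff_C_mul]
        simp only [hfct, coeff_mk, pow_zero, pow_one, coeff_C, Nat.succ_ne_zero, if_false]
        rw [pow_succ, ← mul_assoc, mul_comm θ, mul_assoc, mul_inv_cancel₀ hθ0, mul_one, sub_self]
    have hγq : φ γ = -θ * γ := by
      rw [hφdef]
      calc γ ^ q = γ ^ (q - 1 + 1) := by rw [Nat.sub_add_cancel hq1]
      _ = γ ^ (q - 1) * γ := pow_succ γ _
      _ = -θ * γ := by rw [hγ]
    have hmain : ∀ N, PowerSeries.map φ (P N)
        = (PowerSeries.X - PowerSeries.C θ) * P (N + 1) := by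
      intro N
      rw [hP N, hP (N + 1), Finset.prod_range_succ']
      rw [map_mul, PowerSeries.map_C, hγq, map_prod]
      simp only [show ∀ j, PowerSeries.map φ (PowerSeries.mk fun i => ((θ ^ q ^ j)⁻¹) ^ i) = fct (j + 1) from hmapf]
      calc (PowerSeries.C (-θ * γ)) * ∏ j ∈ Finset.range N, fct (j + 1)
          = PowerSeries.C γ * ((∏ j ∈ Finset.range N, fct (j + 1)) * PowerSeries.C (-θ)) := by
            rw [map_mul]; ring
        _ = PowerSeries.C γ * ((∏ j ∈ Finset.range N, fct (j + 1))
              * ((PowerSeries.X - PowerSeries.C θ) * fct 0)) := by rw [hfct0]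
        _ = (PowerSeries.X - PowerSeries.C θ)
              * (PowerSeries.C γ * ((∏ j ∈ Finset.range N, fct (j + 1)) * fct 0)) := by ring
    have hcoeff : ∀ N i, (PowerSeries.coeff i (P N)) ^ q
        = (if i = 0 then 0 else PowerSeries.coeff (i - 1) (P (N + 1)))
          - θ * PowerSeries.coeff i (P (N + 1)) := by
      intro N i
      have h1 := congrArg (PowerSeries.coeff i) (hmain N)
      rw [PowerSeries.coeff_map, hφdef] at h1
      rw [h1, sub_mul, map_sub, coeff_C_mul]
      congr 1
      cases i with
      | zero => simp [coeff_zero_X_mul]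
      | succ n => rw [coeff_succ_X_mul]; simp
    intro i
    have hlim1 : Tendsto (fun N => (PowerSeries.coeff i (P N)) ^ q)
        atTop (nhds ((ω i) ^ q)) := (hω i).pow q
    have hshift : ∀ j, Tendsto (fun N => PowerSeries.coeff j (P (N + 1)))
        atTop (nhds (ω j)) := fun j => (hω j).comp (tendsto_add_atTop_nat 1)
    have hlim2 : Tendsto (fun N => (if i = 0 then 0
          else PowerSeries.coeff (i - 1) (P (N + 1)))
          - θ * PowerSeries.coeff i (P (N + 1)))
        atTop (nhds ((if i = 0 then 0 else ω (i - 1)) - θ * ω i)) := by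
      refine Filter.Tendsto.sub ?_ ((hshift i).const_mul θ)
      split
      · exact tendsto_const_nhds
      · exact hshift (i - 1)
    have heq : (fun N => (PowerSeries.coeff i (P N)) ^ q)
        = fun N => (if i = 0 then 0 else PowerSeries.coeff (i - 1) (P (N + 1)))
          - θ * PowerSeries.coeff i (P (N + 1)) := funext fun N => hcoeff N i
    rw [heq] at hlim1
    exact tendsto_nhds_unique hlim1 hlim2
end

section
/- Let k_1,…,k_r ∈ C∞ and define β_0 = 1 and, for n ≥ 1, β_n by the recursion (θ − θ^{q^n})·β_n = Σ_{i=1}^{min(n,r)} k_i^{q^{n−i}} β_{n−i}. (These β_n are the coefficients of the logarithm series log_φ = Σ β_n τ^n of the Drinfeld module φ_θ = θ + k_1τ + ⋯ + k_rτ^r, characterized by log_φ · φ_θ = θ · log_φ in C∞[[τ]].) If |k_i| ≤ 1 for all 1 ≤ i ≤ r, then for every n ≥ 0 one has |β_n| ≤ q^{−(q^{n+r} − q^r)/(q^r − 1)}. -/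
section Aux

variable {F : Type*} [Field F] (v : AbsoluteValue F ℝ)

lemma aux_sub_eq (hna : ∀ x y : F, v (x + y) ≤ max (v x) (v y))
    {x y : F} (h : v x < v y) : v (y - x) = v y := by
  have h1 : v (y - x) ≤ max (v y) (v x) := by
    simpa [sub_eq_add_neg] using hna y (-x)
  have h2 : v y ≤ max (v (y - x)) (v x) := by
    simpa using hna (y - x) x
  rcases max_cases (v (y - x)) (v x) with ⟨he, _⟩ | ⟨he, hle⟩
  · rw [he] at h2
    exact le_antisymm (h1.trans_eq (max_eq_left h.le)) h2
  · rw [he] at h2; exact absurd (h2.trans_lt h) (lt_irrefl _)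

lemma aux_sum_le (hna : ∀ x y : F, v (x + y) ≤ max (v x) (v y))
    {ι : Type*} (s : Finset ι) (f : ι → F) (B : ℝ) (hB : 0 ≤ B)
    (h : ∀ i ∈ s, v (f i) ≤ B) : v (∑ i ∈ s, f i) ≤ B := by
  classical
  induction s using Finset.cons_induction with
  | empty => simpa using hB
  | cons a s ha ih =>
    rw [Finset.sum_cons]
    refine (hna _ _).trans (max_le ?_ ?_)
    · exact h a (Finset.mem_cons_self a s)
    · exact ih fun i hi => h i (Finset.mem_cons_of_mem hi)

end Aux

/-- The coefficients `β_n` of the logarithm of a Drinfeld module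
`φ_θ = θ + k_1τ + ⋯ + k_rτ^r` with `|k_i| ≤ 1` satisfy
`|β_n| ≤ q^{−(q^{n+r} − q^r)/(q^r − 1)}`. -/
theorem stmt10 {F : Type*} [Field F] (p m q r : ℕ) [Fact p.Prime] [CharP F p]
    (hm : 0 < m) (hq : q = p ^ m) (hr : 0 < r)
    (v : AbsoluteValue F ℝ) (hna : ∀ x y : F, v (x + y) ≤ max (v x) (v y))
    (θ : F) (hθ : v θ = q)
    (k : ℕ → F) (hk : ∀ i, 1 ≤ i → i ≤ r → v (k i) ≤ 1)
    (β : ℕ → F) (hβ0 : β 0 = 1)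
    (hβ : ∀ n, 1 ≤ n → (θ - θ ^ q ^ n) * β n =
      ∑ i ∈ Finset.Icc 1 (min n r), k i ^ q ^ (n - i) * β (n - i)) :
    ∀ n : ℕ, v (β n) ≤
      (q : ℝ) ^ (-(((q : ℝ) ^ (n + r) - (q : ℝ) ^ r) / ((q : ℝ) ^ r - 1))) := by
  have hq2 : 2 ≤ q := by
    have hp : 2 ≤ p := (Fact.out : p.Prime).two_le
    calc 2 ≤ p := hp
    _ ≤ p ^ m := Nat.le_self_pow hm.ne' p
    _ = q := hq.symm
  set Q : ℝ := (q : ℝ) with hQ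
  have hQ1 : (1 : ℝ) < Q := by rw [hQ]; exact_mod_cast Nat.lt_of_lt_of_le one_lt_two hq2
  have hQ0 : (0 : ℝ) < Q := lt_trans one_pos hQ1
  have hD : (0 : ℝ) < Q ^ r - 1 := by
    have := one_lt_pow₀ hQ1 hr.ne'
    linarith
  set c : ℕ → ℝ := fun n => -((Q ^ (n + r) - Q ^ r) / (Q ^ r - 1)) with hc
  intro n
  induction n using Nat.strong_induction_on with
  | _ n ih =>
  rcases Nat.eq_zero_or_pos n with rfl | hn
  · simp only [hβ0, map_one, zero_add, sub_self, zero_div, neg_zero, Real.rpow_zero, le_refl]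
  -- n ≥ 1
  have hrec := hβ n hn
  -- value of θ - θ^{q^n}
  have hqn1 : 1 < q ^ n := Nat.one_lt_pow hn.ne' (by omega)
  have hvθn : v (θ ^ q ^ n) = Q ^ (q ^ n) := by rw [map_pow, hθ]
  have hlt : v θ < v (θ ^ q ^ n) := by
    rw [hθ, hvθn]
    calc Q = Q ^ 1 := (pow_one Q).symm
    _ < Q ^ (q ^ n) := pow_lt_pow_right₀ hQ1 hqn1
  have hvdiff : v (θ - θ ^ q ^ n) = Q ^ (q ^ n) := by
    have : v (θ ^ q ^ n - θ) = v (θ ^ q ^ n) := aux_sub_eq v hna hlt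
    rw [← hvθn, ← this, ← AbsoluteValue.map_neg v, neg_sub]
  -- bound for the sum
  set B : ℝ := Q ^ (q ^ n) * Q ^ (c n) with hB
  have hterm : ∀ i ∈ Finset.Icc 1 (min n r), v (k i ^ q ^ (n - i) * β (n - i)) ≤ B := by
    intro i hi
    rw [Finset.mem_Icc] at hi
    obtain ⟨hi1, hi2⟩ := hi
    have hin : i ≤ n := hi2.trans (min_le_left n r)
    have hir : i ≤ r := hi2.trans (min_le_right n r)
    have hsub : n - i < n := Nat.sub_lt hn hi1
    have h1 : v (k i ^ q ^ (n - i)) ≤ 1 :=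
      by rw [map_pow]; exact pow_le_one₀ (v.nonneg _) (hk i hi1 hir)
    have h2 : v (β (n - i)) ≤ Q ^ c (n - i) := ih (n - i) hsub
    have h3 : c (n - i) ≤ (q ^ n : ℕ) + c n := by
      push_cast
      simp only [hc]
      set mm := n - i with hmm
      have key : Q ^ n ≤ Q ^ (mm + r) := pow_le_pow_right₀ hQ1.le (by omega)
      have e1 : Q ^ (n + r) = Q ^ n * Q ^ r := pow_add Q n r
      have e2 : Q ^ (mm + r) = Q ^ mm * Q ^ r := pow_add Q mm r
      have h2' : Q ^ (n + r) - Q ^ (mm + r) ≤ Q ^ n * (Q ^ r - 1) := by nlinarith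
      have h3' : (Q ^ (n + r) - Q ^ (mm + r)) / (Q ^ r - 1) ≤ Q ^ n :=
        (div_le_iff₀ hD).mpr h2'
      have h4 : (Q ^ (n + r) - Q ^ r) / (Q ^ r - 1) - (Q ^ (mm + r) - Q ^ r) / (Q ^ r - 1)
          = (Q ^ (n + r) - Q ^ (mm + r)) / (Q ^ r - 1) := by ring
      linarith
    have hBeq : B = Q ^ (((q ^ n : ℕ) : ℝ) + c n) := by
      rw [Real.rpow_add hQ0, Real.rpow_natCast]
    calc v (k i ^ q ^ (n - i) * β (n - i))
        = v (k i ^ q ^ (n - i)) * v (β (n - i)) := v.map_mul _ _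
      _ ≤ 1 * (Q ^ c (n - i)) :=
          mul_le_mul h1 h2 (v.nonneg _) zero_le_one
      _ = Q ^ c (n - i) := one_mul _
      _ ≤ Q ^ (((q ^ n : ℕ) : ℝ) + c n) :=
          Real.rpow_le_rpow_of_exponent_le hQ1.le h3
      _ = B := hBeq.symm
  have hB0 : 0 ≤ B := by positivity
  have hsum : v (∑ i ∈ Finset.Icc 1 (min n r), k i ^ q ^ (n - i) * β (n - i)) ≤ B :=
    aux_sum_le v hna _ _ B hB0 hterm
  have hmain : Q ^ (q ^ n) * v (β n) ≤ Q ^ (q ^ n) * Q ^ c n := by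
    calc Q ^ (q ^ n) * v (β n) = v ((θ - θ ^ q ^ n) * β n) := by
          rw [v.map_mul, hvdiff]
      _ ≤ B := by rw [hrec]; exact hsum
      _ = Q ^ (q ^ n) * Q ^ c n := rfl
  have hpos : (0 : ℝ) < Q ^ (q ^ n) := by positivity
  exact le_of_mul_le_mul_left hmain hpos
end

section
/- Let e: C∞ → C∞ be a function satisfying e(θz) = θ·e(z) + Σ_{j=1}^{r} k_j · e(z)^{q^j} for all z ∈ C∞, and let λ ∈ C∞ satisfy e(λ) = 0. Define the formal power series f(t) = Σ_{i≥0} e(λ/θ^{i+1}) t^i ∈ C∞[[t]]. Then (t − θ)·f = Σ_{j=1}^{r} k_j · f^{(j)}, where f^{(j)} raises each coefficient of f to the q^j-th power. (Equivalently, comparing coefficients: −θ·e(λ/θ) = Σ_j k_j e(λ/θ)^{q^j}, and e(λ/θ^{m}) − θ·e(λ/θ^{m+1}) = Σ_j k_j e(λ/θ^{m+1})^{q^j} for all m ≥ 1.) -/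
/-- Pellarin's identity: if `e(θz) = θe(z) + Σ_{j=1}^r k_j e(z)^{q^j}` and
`e(λ) = 0`, then the Anderson generating function
`f = Σ_i e(λ/θ^{i+1}) t^i` satisfies `(t − θ)·f = Σ_{j=1}^r k_j·f^{(j)}`,
where `f^{(j)}` raises each coefficient of `f` to the `q^j`-th power. -/
theorem stmt12 {F : Type*} [Field F] (p m q r : ℕ) [Fact p.Prime] [CharP F p]
    (hm : 0 < m) (hq : q = p ^ m) (hr : 0 < r)
    (θ : F) (hθ : θ ≠ 0) (k : ℕ → F)
    (e : F → F)
    (he : ∀ z : F,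
      e (θ * z) = θ * e z + ∑ j ∈ Finset.Icc 1 r, k j * (e z) ^ q ^ j)
    (lam : F) (hlam : e lam = 0) :
    (PowerSeries.X - PowerSeries.C θ) *
        PowerSeries.mk (fun i => e (lam / θ ^ (i + 1))) =
      ∑ j ∈ Finset.Icc 1 r, PowerSeries.C (k j) *
        PowerSeries.mk (fun i => (e (lam / θ ^ (i + 1))) ^ q ^ j) := by
  have key : ∀ n : ℕ, e (lam / θ ^ n) =
      θ * e (lam / θ ^ (n + 1)) +
        ∑ j ∈ Finset.Icc 1 r, k j * (e (lam / θ ^ (n + 1))) ^ q ^ j := by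
    intro n
    have h : θ * (lam / θ ^ (n + 1)) = lam / θ ^ n := by
      field_simp
      ring
    rw [← h, he]
  ext n
  rw [sub_mul]
  simp only [map_sub, map_sum, PowerSeries.coeff_C_mul, PowerSeries.coeff_mk]
  cases n with
  | zero =>
    rw [PowerSeries.coeff_zero_X_mul]
    have := key 0
    rw [pow_zero, div_one, hlam] at this
    linear_combination this
  | succ n =>
    rw [PowerSeries.coeff_succ_X_mul, PowerSeries.coeff_mk]
    linear_combination key (n + 1)
end

section
/- Fix r ≥ 1 and constants c_1,…,c_{r−1} ∈ C∞ with |c_j| ≤ 1 and c_r ∈ F_q^×. Define row vectors (f_{1,n},…,f_{r,n}) ∈ C∞[t]^r by: f_{r,0} = 1, f_{i,0} = 0 for i < r; and for n ≥ 0, f_{r−ℓ−1,n+1} = f_{r−ℓ,n}^{(1)} for 0 ≤ ℓ ≤ r−2, and f_{r,n+1} = (1/c_r)·((t−θ)·f_{1,n}^{(1)} − Σ_{j=1}^{r−1} c_j · f_{j+1,n}^{(1)}), where g^{(1)} raises the coefficients of g ∈ C∞[t] to the q-th power. Write n = sr + j with s ≥ 0 and 0 ≤ j ≤ r−1. Then: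 (a) deg_t(f_{r−j,n}) = s and the leading t-coefficient of f_{r−j,n} lies in F_q^×; (b) deg_t(f_{r−j,n}) ≥ deg_t(f_{r−i,n}) for i < j; (c) deg_t(f_{r−j,n}) > deg_t(f_{r−i,n}) for i > j. -/
open Polynomial
/-- Degree structure of the vectors `(f_{1,n},…,f_{r,n})` in the t-motive of the
Drinfeld module `φ_θ = θ + c_1τ + ⋯ + c_rτ^r` with `|c_j| ≤ 1` for `j < r` and
`c_r ∈ F_q^×`: writing `n = s·r + j` with `0 ≤ j ≤ r−1`,
(a) `deg_t f_{r−j,n} = s` with leading coefficient in `F_q^×`;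
(b) `deg f_{r−j,n} ≥ deg f_{r−i,n}` for `i < j`;
(c) `deg f_{r−j,n} > deg f_{r−i,n}` for `i > j`. -/
theorem stmt13 {F : Type*} [Field F] (p e q r : ℕ) [Fact p.Prime] [CharP F p]
    (he : 0 < e) (hq : q = p ^ e) (hr : 0 < r)
    (v : AbsoluteValue F ℝ) (hna : ∀ x y : F, v (x + y) ≤ max (v x) (v y))
    (θ : F) (hθ : v θ = q)
    (c : ℕ → F) (hc : ∀ i, 1 ≤ i → i ≤ r - 1 → v (c i) ≤ 1)
    (hcr : c r ≠ 0) (hcrq : c r ^ q = c r)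
    (fr : F →+* F) (hfr : ∀ x, fr x = x ^ q)
    (f : ℕ → ℕ → Polynomial F)
    (hf0r : f 0 r = 1) (hf0 : ∀ i, 1 ≤ i → i < r → f 0 i = 0)
    (hrec1 : ∀ n i, 1 ≤ i → i ≤ r - 1 → f (n + 1) i = (f n (i + 1)).map fr)
    (hrec2 : ∀ n, f (n + 1) r = Polynomial.C (c r)⁻¹ *
      ((Polynomial.X - Polynomial.C θ) * (f n 1).map fr -
        ∑ j ∈ Finset.Icc 1 (r - 1), Polynomial.C (c j) * (f n (j + 1)).map fr)) :
    ∀ s j : ℕ, j ≤ r - 1 →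
      ((f (s * r + j) (r - j)).natDegree = s ∧
        (f (s * r + j) (r - j)).leadingCoeff ≠ 0 ∧
        (f (s * r + j) (r - j)).leadingCoeff ^ q =
          (f (s * r + j) (r - j)).leadingCoeff) ∧
      (∀ i, i < j →
        (f (s * r + j) (r - i)).degree ≤ (f (s * r + j) (r - j)).degree) ∧
      (∀ i, j < i → i ≤ r - 1 →
        (f (s * r + j) (r - i)).degree < (f (s * r + j) (r - j)).degree) := by
  have hfrinj : Function.Injective fr := fr.injective
  have hdm : ∀ g : Polynomial F, (g.map fr).degree = g.degree := fun g =>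
    degree_map_eq_of_injective hfrinj g
  have hlm : ∀ g : Polynomial F, (g.map fr).leadingCoeff = (g.leadingCoeff) ^ q := fun g => by
    rw [leadingCoeff_map_of_injective hfrinj, hfr]
  have key : ∀ n : ℕ,
      ((f n (r - n % r)).natDegree = n / r ∧
       (f n (r - n % r)).leadingCoeff ≠ 0 ∧
       (f n (r - n % r)).leadingCoeff ^ q = (f n (r - n % r)).leadingCoeff) ∧
      (∀ i, i < n % r → (f n (r - i)).degree ≤ ((n / r : ℕ) : WithBot ℕ)) ∧
      (∀ i, n % r < i → i ≤ r - 1 → (f n (r - i)).degree < ((n / r : ℕ) : WithBot ℕ)) := by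
    intro n
    induction n with
    | zero =>
      simp only [Nat.zero_mod, Nat.zero_div, Nat.sub_zero]
      refine ⟨⟨by simp [hf0r], by simp [hf0r], by simp [hf0r]⟩, fun i hi => absurd hi (by omega),
        fun i hi hir => ?_⟩
      rw [hf0 (r - i) (by omega) (by omega)]
      simp
    | succ n ih =>
      obtain ⟨⟨hnd, hl0, hlq⟩, hb, hc'⟩ := ih
      set s := n / r with hs
      set j := n % r with hj
      have hdiv : r * s + j = n := Nat.div_add_mod n r
      have hjr : j < r := Nat.mod_lt _ hr
      have hpiv0 : f n (r - j) ≠ 0 := leadingCoeff_ne_zero.mp hl0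
      have hpivdeg : (f n (r - j)).degree = (s : WithBot ℕ) := by
        rw [degree_eq_natDegree hpiv0, hnd]
      -- all columns have degree ≤ s
      have hall : ∀ k, 1 ≤ k → k ≤ r → (f n k).degree ≤ (s : WithBot ℕ) := by
        intro k hk1 hkr
        have hik : r - (r - k) = k := by omega
        rcases lt_trichotomy (r - k) j with h | h | h
        · exact hik ▸ hb _ h
        · have hk : k = r - j := by omega
          rw [hk, hpivdeg]
        · exact le_of_lt (hik ▸ hc' _ h (by omega))
      -- the sum term has degree ≤ s
      have hB : (∑ jj ∈ Finset.Icc 1 (r - 1),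
          Polynomial.C (c jj) * (f n (jj + 1)).map fr).degree ≤ (s : WithBot ℕ) := by
        refine le_trans (degree_sum_le _ _) (Finset.sup_le fun jj hjj => ?_)
        simp only [Finset.mem_Icc] at hjj
        refine le_trans (degree_mul_le _ _) ?_
        calc (Polynomial.C (c jj)).degree + ((f n (jj + 1)).map fr).degree
            ≤ 0 + (s : WithBot ℕ) := by
              refine add_le_add degree_C_le ?_
              rw [hdm]
              exact hall _ (by omega) (by omega)
          _ = (s : WithBot ℕ) := zero_add _
      rcases eq_or_lt_of_le (Nat.le_sub_one_of_lt hjr) with hje | hjlt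
      · -- case j = r - 1 : new pivot is column r, degree jumps to s + 1
        have hrs : r * (s + 1) = r * s + r := by ring
        have hn1 : n + 1 = r * (s + 1) := by omega
        have hmod : (n + 1) % r = 0 := by rw [hn1, Nat.mul_mod_right]
        have hdivq : (n + 1) / r = s + 1 := by rw [hn1, Nat.mul_div_cancel_left _ hr]
        have h1 : (1 : ℕ) = r - j := by omega
        -- pivot data at n, column 1
        have hf1 : f n 1 ≠ 0 := h1 ▸ hpiv0
        have hf1deg : (f n 1).degree = (s : WithBot ℕ) := h1 ▸ hpivdeg
        have hf1l : (f n 1).leadingCoeff ^ q = (f n 1).leadingCoeff := h1 ▸ hlq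
        set A : Polynomial F := (Polynomial.X - Polynomial.C θ) * (f n 1).map fr with hA
        have hmap0 : (f n 1).map fr ≠ 0 := by
          simpa [Polynomial.map_eq_zero_iff hfrinj] using hf1
        have hAdeg : A.degree = ((s + 1 : ℕ) : WithBot ℕ) := by
          rw [hA, degree_mul, degree_X_sub_C, hdm, hf1deg]
          push_cast
          ring
        have hAl : A.leadingCoeff = (f n 1).leadingCoeff := by
          rw [hA, leadingCoeff_mul, leadingCoeff_X_sub_C, one_mul, hlm, hf1l]
        have hBlt : (∑ jj ∈ Finset.Icc 1 (r - 1),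
            Polynomial.C (c jj) * (f n (jj + 1)).map fr).degree < A.degree := by
          rw [hAdeg]
          refine lt_of_le_of_lt hB ?_
          exact_mod_cast Nat.lt_succ_self s
        have hsubdeg : (A - _).degree = A.degree := degree_sub_eq_left_of_degree_lt hBlt
        have hsubl := leadingCoeff_sub_of_degree_lt hBlt
        have hcrinv : (c r)⁻¹ ≠ 0 := inv_ne_zero hcr
        have hnewdeg : (f (n + 1) r).degree = ((s + 1 : ℕ) : WithBot ℕ) := by
          rw [hrec2 n, degree_mul, degree_C hcrinv, zero_add, hsubdeg, hAdeg]
        have hnewl : (f (n + 1) r).leadingCoeff = (c r)⁻¹ * (f n 1).leadingCoeff := by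
          rw [hrec2 n, leadingCoeff_mul, leadingCoeff_C, hsubl, hAl]
        have hnew0 : (f (n + 1) r).leadingCoeff ≠ 0 := by
          rw [hnewl]
          exact mul_ne_zero hcrinv (leadingCoeff_ne_zero.mpr hf1)
        rw [hmod, hdivq, Nat.sub_zero]
        refine ⟨⟨?_, hnew0, ?_⟩, fun i hi => absurd hi (by omega), fun i hi hir => ?_⟩
        · exact natDegree_eq_of_degree_eq_some hnewdeg
        · rw [hnewl, mul_pow, hf1l, inv_pow, hcrq]
        · -- columns below: shifted from columns 2..r at time n
          have h1i : 1 ≤ r - i := by omega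
          rw [hrec1 n (r - i) h1i (by omega), hdm, show r - i + 1 = r - (i - 1) by omega]
          rcases lt_trichotomy (i - 1) j with h | h | h
          · refine lt_of_le_of_lt (hb _ h) ?_
            exact_mod_cast Nat.lt_succ_self s
          · rw [show r - (i - 1) = r - j by omega, hpivdeg]
            exact_mod_cast Nat.lt_succ_self s
          · omega
      · -- case j < r - 1 : pivot shifts to column r - (j+1)
        have hn1 : n + 1 = r * s + (j + 1) := by omega
        have hmod : (n + 1) % r = j + 1 := by
          rw [hn1, Nat.mul_add_mod, Nat.mod_eq_of_lt (by omega)]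
        have hdivq : (n + 1) / r = s := by
          rw [hn1, Nat.mul_add_div hr, Nat.div_eq_of_lt (by omega), add_zero]
        have hpivrec : f (n + 1) (r - (j + 1)) = (f n (r - j)).map fr := by
          rw [hrec1 n (r - (j + 1)) (by omega) (by omega), show r - (j + 1) + 1 = r - j by omega]
        -- bound for column r : (X - Cθ) * f n 1 has degree ≤ s since deg f n 1 < s
        have hf1lt : (f n 1).degree < (s : WithBot ℕ) := by
          have := hc' (r - 1) (by omega) (le_refl _)
          rwa [show r - (r - 1) = 1 by omega] at this
        have hAle : ((Polynomial.X - Polynomial.C θ) * (f n 1).map fr).degree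
            ≤ (s : WithBot ℕ) := by
          refine le_trans (degree_mul_le _ _) ?_
          rw [degree_X_sub_C, hdm, add_comm]
          exact Nat.WithBot.add_one_le_of_lt hf1lt
        have hcol_r : (f (n + 1) r).degree ≤ (s : WithBot ℕ) := by
          rw [hrec2 n]
          refine le_trans (degree_mul_le _ _) ?_
          calc (Polynomial.C (c r)⁻¹).degree + _ ≤ 0 + (s : WithBot ℕ) :=
                add_le_add degree_C_le (le_trans (degree_sub_le _ _) (max_le hAle hB))
            _ = (s : WithBot ℕ) := zero_add _
        rw [hmod, hdivq]
        refine ⟨⟨?_, ?_, ?_⟩, fun i hi => ?_, fun i hi hir => ?_⟩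
        · rw [hpivrec, natDegree_map_eq_of_injective hfrinj, hnd]
        · rw [hpivrec, hlm, hlq]
          exact hl0
        · rw [hpivrec, hlm, hlq, hlq]
        · -- i < j + 1
          rcases Nat.eq_zero_or_pos i with hi0 | hi0
          · rw [hi0, Nat.sub_zero]
            exact hcol_r
          · rw [hrec1 n (r - i) (by omega) (by omega),
              show r - i + 1 = r - (i - 1) by omega, hdm]
            rcases lt_trichotomy (i - 1) j with h | h | h
            · exact hb _ h
            · rw [show r - (i - 1) = r - j by omega, hpivdeg]
            · omega
        · -- j + 1 < i ≤ r - 1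
          rw [hrec1 n (r - i) (by omega) (by omega),
            show r - i + 1 = r - (i - 1) by omega, hdm]
          exact hc' (i - 1) (by omega) (by omega)
  -- deduce the statement
  intro s j hjr1
  have hjr : j < r := by omega
  have hmod : (s * r + j) % r = j := by
    rw [mul_comm s r, Nat.mul_add_mod, Nat.mod_eq_of_lt hjr]
  have hdiv : (s * r + j) / r = s := by
    rw [mul_comm, Nat.mul_add_div hr, Nat.div_eq_of_lt hjr, add_zero]
  obtain ⟨⟨hnd, hl0, hlq⟩, hb, hc'⟩ := key (s * r + j)
  simp only [hmod, hdiv] at hnd hl0 hlq hb hc'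
  have hpivdeg : (f (s * r + j) (r - j)).degree = (s : WithBot ℕ) := by
    rw [degree_eq_natDegree (leadingCoeff_ne_zero.mp hl0), hnd]
  exact ⟨⟨hnd, hl0, hlq⟩, fun i hi => hpivdeg ▸ hb i hi,
    fun i hi hir => hpivdeg ▸ hc' i hi hir⟩
end

section
/- In the setting of the recursion for (f_{1,n},…,f_{r,n}) with |c_j| ≤ 1 for j < r and c_r ∈ F_q^× (see context), write n = sr + j with 0 ≤ j ≤ r−1, and write f_{μ,n} = Σ_ν b_{μ,n,ν} t^ν. Then for every 0 ≤ ν ≤ s one has max_{1≤μ≤r} |b_{μ,n,ν}| ≤ q^{(q^n − q^{νr+j})/(q^r − 1)}. -/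
/-- Coefficient bound: with `n = s·r + j` (`0 ≤ j ≤ r−1`) and
`f_{μ,n} = Σ_ν b_{μ,n,ν} t^ν`, for every `0 ≤ ν ≤ s` one has
`max_{1≤μ≤r} |b_{μ,n,ν}| ≤ q^{(q^n − q^{νr+j})/(q^r − 1)}`. -/
theorem stmt14 {F : Type*} [Field F] (p e q r : ℕ) [Fact p.Prime] [CharP F p]
    (he : 0 < e) (hq : q = p ^ e) (hr : 0 < r)
    (v : AbsoluteValue F ℝ) (hna : ∀ x y : F, v (x + y) ≤ max (v x) (v y))
    (θ : F) (hθ : v θ = q)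
    (c : ℕ → F) (hc : ∀ i, 1 ≤ i → i ≤ r - 1 → v (c i) ≤ 1)
    (hcr : c r ≠ 0) (hcrq : c r ^ q = c r)
    (fr : F →+* F) (hfr : ∀ x, fr x = x ^ q)
    (f : ℕ → ℕ → Polynomial F)
    (hf0r : f 0 r = 1) (hf0 : ∀ i, 1 ≤ i → i < r → f 0 i = 0)
    (hrec1 : ∀ n i, 1 ≤ i → i ≤ r - 1 → f (n + 1) i = (f n (i + 1)).map fr)
    (hrec2 : ∀ n, f (n + 1) r = Polynomial.C (c r)⁻¹ *
      ((Polynomial.X - Polynomial.C θ) * (f n 1).map fr -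
        ∑ j ∈ Finset.Icc 1 (r - 1), Polynomial.C (c j) * (f n (j + 1)).map fr)) :
    ∀ s j ν μ : ℕ, j ≤ r - 1 → ν ≤ s → 1 ≤ μ → μ ≤ r →
      v ((f (s * r + j) μ).coeff ν) ≤
        (q : ℝ) ^ (((q : ℝ) ^ (s * r + j) - (q : ℝ) ^ (ν * r + j)) /
          ((q : ℝ) ^ r - 1)) := by
  have hp2 : 2 ≤ p := (Fact.out : p.Prime).two_le
  have hq2 : 2 ≤ q := by
    subst hq
    calc 2 ≤ p := hp2
    _ ≤ p ^ e := Nat.le_self_pow (by omega) p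
  have hQ1 : (1:ℝ) < (q:ℝ) := by exact_mod_cast (show (1:ℕ) < q by omega)
  have hQ0 : (0:ℝ) < (q:ℝ) := by linarith
  have hD : (0:ℝ) < (q:ℝ) ^ r - 1 := by
    have : (1:ℝ) < (q:ℝ) ^ r := one_lt_pow₀ hQ1 hr.ne'
    linarith
  have hpos : ∀ x : ℝ, (0:ℝ) < (q:ℝ) ^ x := fun x => Real.rpow_pos_of_pos hQ0 x
  -- v (c r) = 1
  have hvcr : v (c r) = 1 := by
    have h1 : v (c r) ^ q = v (c r) := by rw [← map_pow, hcrq]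
    have h0 : 0 < v (c r) := v.pos hcr
    by_contra hne
    rcases lt_or_gt_of_ne hne with hlt | hgt
    · have h2 : v (c r) ^ q < v (c r) ^ 1 :=
        pow_lt_pow_right_of_lt_one₀ h0 hlt (by omega)
      rw [h1, pow_one] at h2
      exact lt_irrefl _ h2
    · have h2 : v (c r) ^ 1 < v (c r) ^ q := pow_lt_pow_right₀ hgt (by omega)
      rw [h1, pow_one] at h2
      exact lt_irrefl _ h2
  have hvcrinv : v ((c r)⁻¹) = 1 := by
    have h1 : v (c r) * v ((c r)⁻¹) = 1 := by
      rw [← v.map_mul, mul_inv_cancel₀ hcr, v.map_one]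
    rw [hvcr, one_mul] at h1
    exact h1
  -- nonarchimedean for subtraction
  have hsub : ∀ x y : F, v (x - y) ≤ max (v x) (v y) := by
    intro x y
    have := hna x (-y)
    rwa [v.map_neg, ← sub_eq_add_neg] at this
  -- nonarchimedean for finite sums
  have hsum : ∀ (s : Finset ℕ) (g : ℕ → F) (C : ℝ), 0 ≤ C →
      (∀ i ∈ s, v (g i) ≤ C) → v (∑ i ∈ s, g i) ≤ C := by
    intro s g C hC
    induction s using Finset.induction with
    | empty => intro _; simpa using hC
    | insert _ _ hx ih =>
      intro hb
      rw [Finset.sum_insert hx]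
      exact le_trans (hna _ _) (max_le (hb _ (Finset.mem_insert_self _ _))
        (ih fun i hi => hb i (Finset.mem_insert_of_mem hi)))
  -- mod arithmetic helper
  have hmod : ∀ a i : ℕ, a < r → i < r →
      (a + i) % r = a + i ∨ (a + i) % r + r = a + i := by
    intro a i ha hi
    rcases lt_or_ge (a + i) r with h | h
    · left; exact Nat.mod_eq_of_lt h
    · right
      have h2 : (a + i) % r = (a + i - r) % r := Nat.mod_eq_sub_mod h
      have h3 : a + i - r < r := by omega
      rw [h2, Nat.mod_eq_of_lt h3]
      omega
  have hstep : ∀ m i : ℕ, 1 ≤ i → i < r → m % r ≤ (m + i) % r + r - i := by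
    intro m i h1 h2
    have ha : m % r < r := Nat.mod_lt _ hr
    have hb : (m + i) % r = (m % r + i) % r := by
      rw [Nat.add_mod, Nat.mod_eq_of_lt h2]
    rw [hb]
    rcases hmod (m % r) i ha h2 with h | h <;>
      · generalize (m % r + i) % r = bb at h ⊢
        generalize m % r = a at ha h ⊢
        omega
  -- multiplying the exponent by q
  have hAq : ∀ a b : ℕ, (((q:ℝ) ^ a - (q:ℝ) ^ b) / ((q:ℝ) ^ r - 1)) * (q:ℝ)
      = ((q:ℝ) ^ (a + 1) - (q:ℝ) ^ (b + 1)) / ((q:ℝ) ^ r - 1) := by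
    intro a b
    rw [div_mul_eq_mul_div]
    congr 1
    rw [pow_succ, pow_succ]
    ring
  -- raising to the q-th power
  have hpow : ∀ (x : F) (E : ℝ), v x ≤ (q:ℝ) ^ E → v (x ^ q) ≤ (q:ℝ) ^ (E * (q:ℝ)) := by
    intro x E h
    rw [map_pow]
    calc v x ^ q ≤ ((q:ℝ) ^ E) ^ q := pow_le_pow_left₀ (v.nonneg x) h q
    _ = (q:ℝ) ^ (E * (q:ℝ)) := by
        rw [← Real.rpow_natCast ((q:ℝ) ^ E) q, ← Real.rpow_mul hQ0.le]
  have hmono : ∀ {E E' : ℝ}, E ≤ E' → (q:ℝ) ^ E ≤ (q:ℝ) ^ E' :=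
    fun h => Real.rpow_le_rpow_of_exponent_le hQ1.le h
  -- exponent monotone in the subtracted power
  have hEm : ∀ a b b' : ℕ, b' ≤ b →
      ((q:ℝ) ^ a - (q:ℝ) ^ b) / ((q:ℝ) ^ r - 1)
        ≤ ((q:ℝ) ^ a - (q:ℝ) ^ b') / ((q:ℝ) ^ r - 1) := by
    intro a b b' hbb
    rw [div_le_div_iff₀ hD hD]
    nlinarith [pow_le_pow_right₀ hQ1.le hbb, hD]
  -- the "1 +" inequality
  have hii : ∀ a k : ℕ, 1 + ((q:ℝ) ^ a - (q:ℝ) ^ (k + r)) / ((q:ℝ) ^ r - 1)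
      ≤ ((q:ℝ) ^ a - (q:ℝ) ^ k) / ((q:ℝ) ^ r - 1) := by
    intro a k
    have h1 : (1:ℝ) ≤ (q:ℝ) ^ k := one_le_pow₀ hQ1.le
    rw [← sub_nonneg]
    have heq : ((q:ℝ) ^ a - (q:ℝ) ^ k) / ((q:ℝ) ^ r - 1)
        - (1 + ((q:ℝ) ^ a - (q:ℝ) ^ (k + r)) / ((q:ℝ) ^ r - 1))
        = ((q:ℝ) ^ k * ((q:ℝ) ^ r - 1) - ((q:ℝ) ^ r - 1)) / ((q:ℝ) ^ r - 1) := by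
      rw [pow_add]
      field_simp
      ring
    rw [heq]
    apply div_nonneg ?_ hD.le
    nlinarith [hD]
  -- key induction
  have key : ∀ n : ℕ, ∀ μ, 1 ≤ μ → μ ≤ r → ∀ ν : ℕ,
      v ((f n μ).coeff ν) ≤
        (q:ℝ) ^ (((q:ℝ) ^ n - (q:ℝ) ^ (ν * r + ((n + μ) % r + r - μ))) /
          ((q:ℝ) ^ r - 1)) := by
    intro n
    induction n with
    | zero =>
      intro μ hμ1 hμr ν
      rcases eq_or_lt_of_le hμr with hEq | hlt
      · rw [hEq]
        match ν with
        | 0 =>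
          have he0 : 0 * r + ((0 + r) % r + r - r) = 0 := by
            have : (0 + r) % r = 0 := by simp
            omega
          rw [hf0r, he0]
          simp only [Polynomial.coeff_one, if_pos rfl]
          norm_num
        | Nat.succ m =>
          rw [hf0r]
          simp only [Polynomial.coeff_one]
          rw [if_neg (by omega)]
          rw [v.map_zero]
          exact (hpos _).le
      · rw [hf0 μ hμ1 hlt]
        simp only [Polynomial.coeff_zero, v.map_zero]
        exact (hpos _).le
    | succ n ih =>
      intro μ hμ1 hμr ν
      rcases eq_or_lt_of_le hμr with hEq | hlt
      · -- μ = r : use the recursion hrec2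
        rw [hEq]
        rw [hrec2 n, Polynomial.coeff_C_mul, v.map_mul, hvcrinv, one_mul,
          Polynomial.coeff_sub]
        have hk0 : (n + 1 + r) % r = (n + 1) % r := Nat.add_mod_right (n + 1) r
        refine le_trans (hsub _ _) (max_le ?_ ?_)
        · -- (X - C θ) * (f n 1).map fr
          rw [sub_mul, Polynomial.coeff_sub, Polynomial.coeff_C_mul]
          refine le_trans (hsub _ _) (max_le ?_ ?_)
          · -- X * g₁ part
            match ν with
            | 0 =>
              have : (Polynomial.X * (f n 1).map fr).coeff 0 = 0 := by simp
              rw [this, v.map_zero]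
              exact (hpos _).le
            | Nat.succ m =>
              rw [Polynomial.coeff_X_mul, Polynomial.coeff_map, hfr]
              refine le_trans (hpow _ _ (ih 1 le_rfl (by omega) m)) ?_
              rw [hAq]
              apply hmono
              apply hEm
              rw [hk0, Nat.add_sub_cancel, Nat.succ_mul]
              have ha : (n + 1) % r < r := Nat.mod_lt _ hr
              generalize (n + 1) % r = a at ha ⊢
              generalize m * r = b
              omega
          · rw [v.map_mul, hθ, Polynomial.coeff_map, hfr]
            have h1 := hpow _ _ (ih 1 le_rfl (by omega) ν)
            calc (q:ℝ) * v ((f n 1).coeff ν ^ q)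
                ≤ (q:ℝ) * (q:ℝ) ^ ((((q:ℝ) ^ n -
                    (q:ℝ) ^ (ν * r + ((n + 1) % r + r - 1))) /
                    ((q:ℝ) ^ r - 1)) * (q:ℝ)) :=
                  mul_le_mul_of_nonneg_left h1 hQ0.le
              _ = (q:ℝ) ^ (1 + (((q:ℝ) ^ n -
                    (q:ℝ) ^ (ν * r + ((n + 1) % r + r - 1))) /
                    ((q:ℝ) ^ r - 1)) * (q:ℝ)) := by
                  rw [Real.rpow_add hQ0, Real.rpow_one]
              _ ≤ (q:ℝ) ^ (((q:ℝ) ^ (n + 1) -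
                    (q:ℝ) ^ (ν * r + ((n + 1 + r) % r + r - r))) /
                    ((q:ℝ) ^ r - 1)) := by
                  apply hmono
                  rw [hAq]
                  have hb : ν * r + ((n + 1) % r + r - 1) + 1
                      = (ν * r + ((n + 1 + r) % r + r - r)) + r := by
                    rw [hk0, Nat.add_sub_cancel]
                    have ha : (n + 1) % r < r := Nat.mod_lt _ hr
                    generalize (n + 1) % r = a at ha ⊢
                    omega
                  rw [hb]
                  exact hii _ _
        · -- the sum part
          rw [Polynomial.finset_sum_coeff]
          apply hsum _ _ _ (hpos _).le
          intro i hi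
          obtain ⟨hi1, hi2⟩ := Finset.mem_Icc.mp hi
          rw [Polynomial.coeff_C_mul, Polynomial.coeff_map, hfr, v.map_mul]
          have h1 := hpow _ _ (ih (i + 1) (by omega) (by omega) ν)
          calc v (c i) * v ((f n (i + 1)).coeff ν ^ q)
              ≤ 1 * (q:ℝ) ^ ((((q:ℝ) ^ n -
                  (q:ℝ) ^ (ν * r + ((n + (i + 1)) % r + r - (i + 1)))) /
                  ((q:ℝ) ^ r - 1)) * (q:ℝ)) :=
                mul_le_mul (hc i hi1 hi2) h1 (v.nonneg _) zero_le_one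
            _ ≤ (q:ℝ) ^ (((q:ℝ) ^ (n + 1) -
                  (q:ℝ) ^ (ν * r + ((n + 1 + r) % r + r - r))) /
                  ((q:ℝ) ^ r - 1)) := by
                rw [one_mul, hAq]
                apply hmono
                apply hEm
                have hilt : i < r := by omega
                rw [hk0, Nat.add_sub_cancel,
                  show n + (i + 1) = n + 1 + i from by omega]
                have h2 := hstep (n + 1) i hi1 hilt
                have ha : (n + 1) % r < r := Nat.mod_lt _ hr
                have hb' : (n + 1 + i) % r < r := Nat.mod_lt _ hr
                generalize (n + 1 + i) % r = bb at h2 hb' ⊢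
                generalize (n + 1) % r = a at ha h2 ⊢
                omega
      · -- μ < r : twist
        rw [hrec1 n μ hμ1 (by omega), Polynomial.coeff_map, hfr]
        refine le_trans (hpow _ _ (ih (μ + 1) (by omega) (by omega) ν)) ?_
        have hb : ν * r + ((n + 1 + μ) % r + r - μ)
            = (ν * r + ((n + (μ + 1)) % r + r - (μ + 1))) + 1 := by
          rw [show n + (μ + 1) = n + 1 + μ from by omega]
          have ha : (n + 1 + μ) % r < r := Nat.mod_lt _ hr
          generalize (n + 1 + μ) % r = a at ha ⊢
          omega
        rw [hAq]
        exact hmono (le_of_eq (by rw [hb]))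
  -- conclude
  intro s j ν μ hj hν hμ1 hμr
  have hjr : j < r := by omega
  refine le_trans (key (s * r + j) μ hμ1 hμr ν) (hmono (hEm _ _ _ ?_))
  -- ν*r + j ≤ ν*r + ((s*r+j+μ) % r + r - μ)
  have h1 : (s * r + j + μ) % r = (j + μ) % r := by
    rw [add_assoc, add_comm (s * r) (j + μ), Nat.add_mul_mod_self_right]
  rw [h1]
  have h2 : j ≤ (j + μ) % r + r - μ := by
    rcases eq_or_lt_of_le hμr with hEq | hlt
    · rw [hEq, Nat.add_mod_right, Nat.mod_eq_of_lt hjr]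
      omega
    · rcases hmod j μ hjr hlt with h | h <;>
        · generalize (j + μ) % r = a at h ⊢
          omega
  generalize (j + μ) % r + r - μ = b at h2 ⊢
  omega
end

section
/- In the setting of the recursion for (f_{1,n},…,f_{r,n}) with |c_j| ≤ 1 for j < r and c_r ∈ F_q^× (see context), let ‖g‖ denote the Gauss norm of g ∈ C∞[t] (the maximum of the absolute values of its coefficients). Then for every n ≥ 0, max_{1≤μ≤r} ‖f_{μ,n}‖ ≤ q^{(q^{n+r−1} − q^{r−1})/(q^r − 1)}. -/
private lemma ultra_sum {F : Type*} [Field F] (v : AbsoluteValue F ℝ)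
    (hna : ∀ x y : F, v (x + y) ≤ max (v x) (v y))
    {ι : Type*} (s : Finset ι) (t : ι → F) {B : ℝ} (hB : 0 ≤ B)
    (h : ∀ j ∈ s, v (t j) ≤ B) : v (∑ j ∈ s, t j) ≤ B := by
  classical
  induction s using Finset.induction_on with
  | empty => simpa using hB
  | @insert a s hx ih =>
    rw [Finset.sum_insert hx]
    exact le_trans (hna _ _) (max_le (h _ (Finset.mem_insert_self _ _))
      (ih fun j hj => h j (Finset.mem_insert_of_mem hj)))

private noncomputable def Ex (q r n μ : ℕ) : ℝ :=
  max 0 (((q:ℝ)^n - (q:ℝ)^(r-μ))/((q:ℝ)^r - 1))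

/-- Gauss norm bound: for every `n`, the Gauss norm of each `f_{μ,n}` (i.e. the
maximum of the absolute values of its coefficients) is at most
`q^{(q^{n+r−1} − q^{r−1})/(q^r − 1)}`. -/
theorem stmt15 {F : Type*} [Field F] (p e q r : ℕ) [Fact p.Prime] [CharP F p]
    (he : 0 < e) (hq : q = p ^ e) (hr : 0 < r)
    (v : AbsoluteValue F ℝ) (hna : ∀ x y : F, v (x + y) ≤ max (v x) (v y))
    (θ : F) (hθ : v θ = q)
    (c : ℕ → F) (hc : ∀ i, 1 ≤ i → i ≤ r - 1 → v (c i) ≤ 1)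
    (hcr : c r ≠ 0) (hcrq : c r ^ q = c r)
    (fr : F →+* F) (hfr : ∀ x, fr x = x ^ q)
    (f : ℕ → ℕ → Polynomial F)
    (hf0r : f 0 r = 1) (hf0 : ∀ i, 1 ≤ i → i < r → f 0 i = 0)
    (hrec1 : ∀ n i, 1 ≤ i → i ≤ r - 1 → f (n + 1) i = (f n (i + 1)).map fr)
    (hrec2 : ∀ n, f (n + 1) r = Polynomial.C (c r)⁻¹ *
      ((Polynomial.X - Polynomial.C θ) * (f n 1).map fr -
        ∑ j ∈ Finset.Icc 1 (r - 1), Polynomial.C (c j) * (f n (j + 1)).map fr)) :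
    ∀ n μ : ℕ, 1 ≤ μ → μ ≤ r → ∀ i : ℕ,
      v ((f n μ).coeff i) ≤
        (q : ℝ) ^ (((q : ℝ) ^ (n + (r - 1)) - (q : ℝ) ^ (r - 1)) /
          ((q : ℝ) ^ r - 1)) := by
  have hp2 : 2 ≤ p := (Fact.out : p.Prime).two_le
  have hq2 : 2 ≤ q := by
    calc 2 ≤ p := hp2
    _ ≤ p ^ e := Nat.le_self_pow he.ne' p
    _ = q := hq.symm
  have hQ1 : (1:ℝ) < (q:ℝ) := by exact_mod_cast lt_of_lt_of_le one_lt_two hq2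
  have hQ0 : (0:ℝ) < (q:ℝ) := lt_trans one_pos hQ1
  have hD : (0:ℝ) < (q:ℝ)^r - 1 := sub_pos.2 (one_lt_pow₀ hQ1 hr.ne')
  -- vanishing of early components
  have hvanish : ∀ n μ, 1 ≤ μ → μ + n < r → f n μ = 0 := by
    intro n
    induction n with
    | zero => intro μ hμ1 hμ2; exact hf0 μ hμ1 (by omega)
    | succ n ih =>
      intro μ hμ1 hμ2
      rw [hrec1 n μ hμ1 (by omega), ih (μ+1) (by omega) (by omega), Polynomial.map_zero]
  -- |c r| = 1
  have hvcr : v (c r) = 1 := by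
    have h1 : v (c r) ^ q = v (c r) := by rw [← map_pow, hcrq]
    have h0 : 0 < v (c r) := v.pos hcr
    have h1' : v (c r) ^ (q - 1) * v (c r) = 1 * v (c r) := by
      rw [← pow_succ, one_mul]
      rw [show q - 1 + 1 = q by omega, h1]
    have h2 : v (c r) ^ (q - 1) = 1 := mul_right_cancel₀ h0.ne' h1'
    rcases lt_trichotomy (v (c r)) 1 with h | h | h
    · nlinarith [pow_lt_one₀ h0.le h (by omega : q - 1 ≠ 0)]
    · exact h
    · nlinarith [one_lt_pow₀ h (by omega : q - 1 ≠ 0)]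
  have hvcrinv : v (c r)⁻¹ = 1 := by
    have h2 := v.map_mul (c r)⁻¹ (c r)
    rw [inv_mul_cancel₀ hcr, map_one, hvcr, mul_one] at h2
    exact h2.symm
  -- exponent shift identity
  have hshift : ∀ n μ : ℕ, μ + 1 ≤ r →
      Ex q r n (μ+1) * q = max 0 (((q:ℝ)^(n+1) - (q:ℝ)^(r-μ))/((q:ℝ)^r - 1)) := by
    intro n μ hμ
    have h1 : r - μ = (r - (μ+1)) + 1 := by omega
    rw [Ex, max_mul_of_nonneg _ _ hQ0.le, zero_mul, h1, pow_succ, pow_succ]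
    congr 1
    field_simp
  -- main inductive claim
  have key : ∀ n μ, 1 ≤ μ → μ ≤ r → ∀ i,
      v ((f n μ).coeff i) ≤ (q:ℝ) ^ (Ex q r n μ) := by
    intro n
    induction n with
    | zero =>
      intro μ h1 h2 i
      have h1le : (1:ℝ) ≤ (q:ℝ) ^ (Ex q r 0 μ) := by
        calc (1:ℝ) = (q:ℝ) ^ (0:ℝ) := (Real.rpow_zero _).symm
        _ ≤ _ := Real.rpow_le_rpow_of_exponent_le hQ1.le (le_max_left _ _)
      rcases eq_or_lt_of_le h2 with h | h
      · subst h
        rw [hf0r, Polynomial.coeff_one]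
        split_ifs
        · simpa using h1le
        · simpa using le_trans zero_le_one h1le
      · rw [hf0 μ h1 h, Polynomial.coeff_zero]
        simpa using le_trans zero_le_one h1le
    | succ n ih =>
      intro μ h1 h2 i
      rcases eq_or_lt_of_le h2 with hμr | hμr
      · -- μ = r
        rw [hμr, hrec2 n, Polynomial.coeff_C_mul, v.map_mul, hvcrinv, one_mul,
          Polynomial.coeff_sub]
        have hErpos : (0:ℝ) ≤ (q:ℝ) ^ (Ex q r (n+1) r) := (Real.rpow_pos_of_pos hQ0 _).le
        have hEeq : Ex q r (n+1) r = max 0 (((q:ℝ)^(n+1) - 1)/((q:ℝ)^r - 1)) := by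
          rw [Ex, Nat.sub_self, pow_zero]
        have hA : v (((Polynomial.X - Polynomial.C θ) * (f n 1).map fr).coeff i)
            ≤ (q:ℝ) ^ (Ex q r (n+1) r) := by
          by_cases hn : 1 + n < r
          · rw [hvanish n 1 le_rfl hn]
            simp only [Polynomial.map_zero, mul_zero, Polynomial.coeff_zero, map_zero]
            exact hErpos
          · push_neg at hn
            have e1 : Ex q r n 1 = ((q:ℝ)^n - (q:ℝ)^(r-1))/((q:ℝ)^r - 1) :=
              max_eq_right (div_nonneg (sub_nonneg.2
                (pow_le_pow_right₀ hQ1.le (by omega))) hD.le)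
            have h3 : (q:ℝ) * (q:ℝ)^(r-1) = (q:ℝ)^r := by
              rw [← pow_succ']; congr 1; omega
            have e2 : 1 + Ex q r n 1 * q ≤ Ex q r (n+1) r := by
              rw [hEeq, e1]
              refine le_trans (le_of_eq ?_) (le_max_right _ _)
              field_simp
              rw [pow_succ]
              ring_nf
              linear_combination -h3
            have hg : ∀ j, v (((f n 1).map fr).coeff j) ≤ (q:ℝ) ^ (Ex q r n 1 * q) := by
              intro j
              rw [Polynomial.coeff_map, hfr, map_pow]
              calc v ((f n 1).coeff j) ^ q ≤ ((q:ℝ) ^ (Ex q r n 1)) ^ q :=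
                    pow_le_pow_left₀ (v.nonneg _) (ih 1 le_rfl hr j) q
              _ = (q:ℝ) ^ (Ex q r n 1 * q) := by
                    rw [← Real.rpow_natCast ((q:ℝ) ^ (Ex q r n 1)) q,
                      ← Real.rpow_mul hQ0.le]
            have hsplit : ((Polynomial.X - Polynomial.C θ) * (f n 1).map fr).coeff i =
                (Polynomial.X * ((f n 1).map fr)).coeff i -
                  θ * ((f n 1).map fr).coeff i := by
              rw [sub_mul, Polynomial.coeff_sub, Polynomial.coeff_C_mul]
            rw [hsplit]
            have ht2 : v (θ * ((f n 1).map fr).coeff i) ≤ (q:ℝ) ^ (Ex q r (n+1) r) := by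
              rw [v.map_mul, hθ]
              calc (q:ℝ) * v (((f n 1).map fr).coeff i)
                  ≤ (q:ℝ) * ((q:ℝ) ^ (Ex q r n 1 * q)) := by
                    exact mul_le_mul_of_nonneg_left (hg i) hQ0.le
                _ = (q:ℝ) ^ (1 + Ex q r n 1 * q) := by
                    rw [Real.rpow_add hQ0, Real.rpow_one]
                _ ≤ _ := Real.rpow_le_rpow_of_exponent_le hQ1.le e2
            have ht1 : v ((Polynomial.X * ((f n 1).map fr)).coeff i)
                ≤ (q:ℝ) ^ (Ex q r (n+1) r) := by
              cases i with
              | zero =>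
                rw [Polynomial.mul_coeff_zero, Polynomial.coeff_X_zero, zero_mul, map_zero]
                exact hErpos
              | succ k =>
                rw [Polynomial.coeff_X_mul]
                refine le_trans (hg k) (Real.rpow_le_rpow_of_exponent_le hQ1.le ?_)
                linarith [e2]
            calc v ((Polynomial.X * ((f n 1).map fr)).coeff i -
                  θ * ((f n 1).map fr).coeff i)
                ≤ max (v ((Polynomial.X * ((f n 1).map fr)).coeff i))
                    (v (θ * ((f n 1).map fr).coeff i)) := by
                  have := hna ((Polynomial.X * ((f n 1).map fr)).coeff i)
                    (-(θ * ((f n 1).map fr).coeff i))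
                  simpa [sub_eq_add_neg, v.map_neg] using this
              _ ≤ _ := max_le ht1 ht2
        have hS : v ((∑ j ∈ Finset.Icc 1 (r-1),
              Polynomial.C (c j) * (f n (j+1)).map fr).coeff i)
            ≤ (q:ℝ) ^ (Ex q r (n+1) r) := by
          rw [Polynomial.finset_sum_coeff]
          refine ultra_sum v hna _ _ hErpos ?_
          intro j hj
          simp only [Finset.mem_Icc] at hj
          rw [Polynomial.coeff_C_mul, v.map_mul, Polynomial.coeff_map, hfr, map_pow]
          calc v (c j) * v ((f n (j+1)).coeff i) ^ q
              ≤ 1 * ((q:ℝ) ^ (Ex q r n (j+1))) ^ q :=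
                mul_le_mul (hc j hj.1 hj.2)
                  (pow_le_pow_left₀ (v.nonneg _) (ih (j+1) (by omega) (by omega) i) q)
                  (by positivity) zero_le_one
            _ = (q:ℝ) ^ (Ex q r n (j+1) * q) := by
                rw [one_mul, ← Real.rpow_natCast ((q:ℝ) ^ (Ex q r n (j+1))) q,
                  ← Real.rpow_mul hQ0.le]
            _ ≤ _ := by
                refine Real.rpow_le_rpow_of_exponent_le hQ1.le ?_
                rw [hshift n j (by omega), hEeq]
                have h1q : (1:ℝ) ≤ (q:ℝ)^(r-j) := one_le_pow₀ hQ1.le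
                gcongr
        calc v (((Polynomial.X - Polynomial.C θ) * (f n 1).map fr).coeff i -
              (∑ j ∈ Finset.Icc 1 (r-1),
                Polynomial.C (c j) * (f n (j+1)).map fr).coeff i)
            ≤ max (v (((Polynomial.X - Polynomial.C θ) * (f n 1).map fr).coeff i))
                (v ((∑ j ∈ Finset.Icc 1 (r-1),
                  Polynomial.C (c j) * (f n (j+1)).map fr).coeff i)) := by
              have := hna (((Polynomial.X - Polynomial.C θ) * (f n 1).map fr).coeff i)
                (-((∑ j ∈ Finset.Icc 1 (r-1),
                  Polynomial.C (c j) * (f n (j+1)).map fr).coeff i))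
              simpa [sub_eq_add_neg, v.map_neg] using this
          _ ≤ _ := max_le hA hS
      · -- μ < r
        have hμ1 : μ + 1 ≤ r := hμr
        rw [hrec1 n μ h1 (by omega), Polynomial.coeff_map, hfr, map_pow]
        calc v ((f n (μ+1)).coeff i) ^ q ≤ ((q:ℝ) ^ (Ex q r n (μ+1))) ^ q :=
              pow_le_pow_left₀ (v.nonneg _) (ih (μ+1) (by omega) hμ1 i) q
          _ = (q:ℝ) ^ (Ex q r n (μ+1) * q) := by
              rw [← Real.rpow_natCast ((q:ℝ) ^ (Ex q r n (μ+1))) q,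
                ← Real.rpow_mul hQ0.le]
          _ ≤ (q:ℝ) ^ (Ex q r (n+1) μ) := by
              refine Real.rpow_le_rpow_of_exponent_le hQ1.le ?_
              rw [hshift n μ hμ1, Ex]
  -- conclusion
  intro n μ h1 h2 i
  refine le_trans (key n μ h1 h2 i) (Real.rpow_le_rpow_of_exponent_le hQ1.le ?_)
  have hT : (0:ℝ) ≤ ((q:ℝ)^(n + (r-1)) - (q:ℝ)^(r-1))/((q:ℝ)^r - 1) :=
    div_nonneg (sub_nonneg.2 (pow_le_pow_right₀ hQ1.le (by omega))) hD.le
  refine max_le hT ?_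
  rw [div_le_div_iff₀ hD hD]
  have hpa : (q:ℝ)^(n + (r-1)) = (q:ℝ)^n * (q:ℝ)^(r-1) := pow_add _ _ _
  have hx : (0:ℝ) ≤ ((q:ℝ)^n - 1) * ((q:ℝ)^(r-1) - 1) :=
    mul_nonneg (sub_nonneg.2 (one_le_pow₀ hQ1.le)) (sub_nonneg.2 (one_le_pow₀ hQ1.le))
  have hy : (1:ℝ) ≤ (q:ℝ)^(r-μ) := one_le_pow₀ hQ1.le
  nlinarith [hD]
end

section
/- Let φ_θ(z) = θz + k_1z^q + ⋯ + k_rz^{q^r} with |k_i| ≤ 1 for i < r and k_r ∈ F_q^×, let ξ_1,…,ξ_r be an F_q-basis of the roots of φ_θ in C∞, let B = (ξ_j^{q^{i−1}}) be their Moore matrix, let V ∈ Mat_r(C∞) have entries V_{ij} = k_{i+j−1}^{(1−j)} for i+j ≤ r+1 and 0 otherwise, and set U = V^tr · B^{(1)} ∈ GL_r(C∞). For 1 ≤ j ≤ r let e_j be the j-th standard basis column vector. Then Σ_{j=1}^{r} ((U^{−1})^{(j−2)} e_1) · (e_{r−j+1}^tr · U^{(r−2)}) = Id_r, where X^{(m)}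 twists every entry of a matrix X by x ↦ x^{q^m} (using q-th roots for negative m) and each summand is the r×r outer product of a column with a row. -/
section Aux16
variable {F : Type*} [Field F]

lemma powApply16 (e : F ≃+* F) (n : ℕ) (x : F) : (e ^ n) x = (⇑e)^[n] x := by
  induction n generalizing x with
  | zero => rfl
  | succ n ih =>
    rw [pow_succ, Function.iterate_succ_apply]
    exact ih (e x)

lemma symmPowApply16 (e : F ≃+* F) (n : ℕ) (x : F) :
    ((e ^ n)⁻¹ : F ≃+* F) x = (⇑e.symm)^[n] x := by
  rw [← inv_pow]
  induction n generalizing x with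
  | zero => rfl
  | succ n ih =>
    rw [pow_succ, Function.iterate_succ_apply]
    exact ih (e.symm x)

def Tw16 (φ : F ≃+* F) (n : ℤ) {r : ℕ} (M : Matrix (Fin r) (Fin r) F) :
    Matrix (Fin r) (Fin r) F := M.map ⇑(φ ^ n)

lemma Tw16_apply (φ : F ≃+* F) (n : ℤ) {r : ℕ} (M : Matrix (Fin r) (Fin r) F) (i j) :
    Tw16 φ n M i j = (φ ^ n) (M i j) := rfl

lemma Tw16_mul (φ : F ≃+* F) (n : ℤ) {r : ℕ} (M N : Matrix (Fin r) (Fin r) F) :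
    Tw16 φ n (M * N) = Tw16 φ n M * Tw16 φ n N := by
  ext i j
  simp [Tw16_apply, Matrix.mul_apply, map_sum]

lemma Tw16_one (φ : F ≃+* F) (n : ℤ) {r : ℕ} :
    Tw16 φ n (1 : Matrix (Fin r) (Fin r) F) = 1 := by
  ext i j
  rw [Tw16_apply, Matrix.one_apply]
  split <;> simp [Matrix.one_apply_eq, Matrix.one_apply_ne, *]

lemma Tw16_Tw16 (φ : F ≃+* F) (a b : ℤ) {r : ℕ} (M : Matrix (Fin r) (Fin r) F) :
    Tw16 φ a (Tw16 φ b M) = Tw16 φ (a + b) M := by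
  ext i j
  rw [Tw16_apply, Tw16_apply, Tw16_apply, zpow_add]
  rfl

lemma Tw16_zero (φ : F ≃+* F) {r : ℕ} (M : Matrix (Fin r) (Fin r) F) :
    Tw16 φ 0 M = M := by
  ext i j; rw [Tw16_apply]; rfl

/-- the auxiliary last-column entries of the companion-type matrix -/
def aAux16 (φ : F ≃+* F) (θ : F) (q : ℕ) (k : ℕ → F) (r : ℕ) (i : Fin r) : F :=
  -(if (i : ℕ) = 0 then θ ^ q else (⇑φ.symm)^[(i : ℕ) - 1] (k (i : ℕ))) * (k r)⁻¹

/-- the companion-type matrix `A` with `U^{(1)} = A U`. -/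
def AAux16 (φ : F ≃+* F) (θ : F) (q : ℕ) (k : ℕ → F) (r : ℕ) :
    Matrix (Fin r) (Fin r) F :=
  Matrix.of fun i l =>
    (if (i : ℕ) = (l : ℕ) + 1 then (1 : F) else 0) +
      (if (l : ℕ) = r - 1 then aAux16 φ θ q k r i else 0)

def Qm16 (φ : F ≃+* F) {r : ℕ} (A : Matrix (Fin r) (Fin r) F) :
    ℕ → Matrix (Fin r) (Fin r) F
  | 0 => 1
  | s + 1 => Qm16 φ A s * Tw16 φ (-(s + 1 : ℕ) : ℤ) A

end Aux16

/-- With `U = V^tr·B^{(1)}` built from the Moore matrix `B` of an `F_q`-basis of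
roots of `φ_θ` and the matrix `V` of twisted coefficients, one has
`Σ_{j=1}^{r} ((U^{−1})^{(j−2)} e_1)·(e_{r−j+1}^tr · U^{(r−2)}) = Id_r`,
where `X^{(m)}` applies the Frobenius twist `x ↦ x^{q^m}` entrywise. -/
theorem stmt16 {F : Type*} [Field F] (p m q r : ℕ) [Fact p.Prime] [CharP F p]
    (hm : 0 < m) (hq : q = p ^ m) (hr : 0 < r)
    (v : AbsoluteValue F ℝ) (hna : ∀ x y : F, v (x + y) ≤ max (v x) (v y))
    (θ : F) (hθ : v θ = q)
    (φ : F ≃+* F) (hφ : ∀ x, φ x = x ^ q)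
    (k : ℕ → F) (hk : ∀ i, 1 ≤ i → i ≤ r - 1 → v (k i) ≤ 1)
    (hkr : k r ≠ 0) (hkrq : k r ^ q = k r)
    (ξ : Fin r → F)
    (hroot : ∀ j, θ * ξ j + ∑ i ∈ Finset.Icc 1 r, k i * ξ j ^ q ^ i = 0)
    (hind : ∀ c : Fin r → F, (∀ j, c j ^ q = c j) →
      ∑ j, c j * ξ j = 0 → ∀ j, c j = 0)
    (tz : ℤ → F → F)
    (htz : ∀ (n : ℕ) (x : F),
      tz (n : ℤ) x = (⇑φ)^[n] x ∧ tz (-(n : ℤ)) x = (⇑φ.symm)^[n] x)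
    (B V U : Matrix (Fin r) (Fin r) F)
    (hB : ∀ i j, B i j = ξ j ^ q ^ (i : ℕ))
    (hV : ∀ i j : Fin r, V i j =
      if (i : ℕ) + (j : ℕ) + 1 ≤ r then
        (⇑φ.symm)^[(j : ℕ)] (k ((i : ℕ) + (j : ℕ) + 1))
      else 0)
    (hU : U = V.transpose * B.map ⇑φ) :
    ∑ j : Fin r, Matrix.vecMulVec
        (fun i => tz (((j : ℕ) : ℤ) - 1) (U⁻¹ i ⟨0, hr⟩))
        (fun l => tz ((r : ℤ) - 2) (U j.rev l)) = 1 := by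
  classical
  -- ## basic Frobenius facts
  have hxi : ∀ (x : F) (n : ℕ), φ (x ^ q ^ n) = x ^ q ^ (n + 1) := by
    intro x n; rw [hφ, ← pow_mul, ← pow_succ]
  have hsy : ∀ (n : ℕ) (x : F), φ ((⇑φ.symm)^[n + 1] x) = (⇑φ.symm)^[n] x := by
    intro n x; rw [Function.iterate_succ_apply']; exact φ.apply_symm_apply _
  have hsymm_kr : φ.symm (k r) = k r := by
    apply φ.injective; rw [φ.apply_symm_apply, hφ, hkrq]
  have hfixr : ∀ n : ℕ, (⇑φ.symm)^[n] (k r) = k r := by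
    intro n
    induction n with
    | zero => rfl
    | succ n ih => rw [Function.iterate_succ_apply, hsymm_kr]; exact ih
  -- ## explicit formula for U
  have hUe : ∀ i j : Fin r, U i j =
      ∑ l ∈ Finset.range (r - (i : ℕ)),
        (⇑φ.symm)^[(i : ℕ)] (k (l + (i : ℕ) + 1)) * ξ j ^ q ^ (l + 1) := by
    intro i j
    rw [hU, Matrix.mul_apply]
    have h1 : ∀ l : Fin r, V.transpose i l * (B.map ⇑φ) l j
        = if (l : ℕ) + (i : ℕ) + 1 ≤ r then
            (⇑φ.symm)^[(i : ℕ)] (k ((l : ℕ) + (i : ℕ) + 1)) * ξ j ^ q ^ ((l : ℕ) + 1)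
          else 0 := by
      intro l
      rw [Matrix.transpose_apply, hV, Matrix.map_apply, hB, hxi, ite_mul, zero_mul]
    rw [Finset.sum_congr rfl fun l _ => h1 l]
    rw [Fin.sum_univ_eq_sum_range (fun l =>
      if l + (i : ℕ) + 1 ≤ r then
        (⇑φ.symm)^[(i : ℕ)] (k (l + (i : ℕ) + 1)) * ξ j ^ q ^ (l + 1) else 0)]
    rw [← Finset.sum_filter]
    refine Finset.sum_congr (Finset.ext fun l => ?_) fun _ _ => rfl
    simp only [Finset.mem_filter, Finset.mem_range]
    omega
  have hUr : ∀ j, U ⟨r - 1, by omega⟩ j = k r * ξ j ^ q := by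
    intro j
    rw [hUe]
    simp only [Fin.val_mk]
    rw [show r - (r - 1) = 1 from by omega, Finset.sum_range_one,
      show 0 + (r - 1) + 1 = r from by omega, hfixr, pow_one]
  -- ## the companion-type matrix identity φ(U) = A U
  have hAmul : ∀ (i j : Fin r), (AAux16 φ θ q k r * U) i j =
      (∑ l : Fin r, (if (i : ℕ) = (l : ℕ) + 1 then (1 : F) else 0) * U l j)
        + aAux16 φ θ q k r i * U ⟨r - 1, by omega⟩ j := by
    intro i j
    rw [Matrix.mul_apply]
    simp only [AAux16, Matrix.of_apply, add_mul]
    rw [Finset.sum_add_distrib]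
    congr 1
    rw [Finset.sum_eq_single_of_mem (⟨r - 1, by omega⟩ : Fin r) (Finset.mem_univ _)
      (fun b _ hbne => by
        rw [if_neg (fun hb => hbne (Fin.val_injective hb)), zero_mul])]
    rw [if_pos rfl]
  have hAU : ∀ i j : Fin r, φ (U i j) = (AAux16 φ θ q k r * U) i j := by
    intro i j
    rcases Nat.eq_zero_or_pos (i : ℕ) with h0 | hpos
    · -- case i = 0
      have hU0 : U i j = ∑ l ∈ Finset.range r, k (l + 1) * ξ j ^ q ^ (l + 1) := by
        rw [hUe, h0]
        simp only [Function.iterate_zero, id_eq, Nat.sub_zero, add_zero]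
      have hL : φ (U i j) = ∑ l ∈ Finset.range r, φ (k (l + 1)) * ξ j ^ q ^ (l + 1 + 1) := by
        rw [hU0, map_sum]
        exact Finset.sum_congr rfl fun l _ => by rw [map_mul, hxi]
      have hroot1 : ∑ l ∈ Finset.range r, φ (k (l + 1)) * ξ j ^ q ^ (l + 1 + 1)
          = -(θ ^ q * ξ j ^ q) := by
        have h := congrArg φ (hroot j)
        rw [map_zero, map_add, map_mul, map_sum] at h
        have h2 : ∑ i ∈ Finset.Icc 1 r, φ (k i * ξ j ^ q ^ i)
            = ∑ i ∈ Finset.Icc 1 r, φ (k i) * ξ j ^ q ^ (i + 1) :=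
          Finset.sum_congr rfl fun i _ => by rw [map_mul, hxi]
        rw [h2] at h
        rw [hφ θ, hφ (ξ j)] at h
        have h3 : ∑ i ∈ Finset.Icc 1 r, φ (k i) * ξ j ^ q ^ (i + 1)
            = ∑ l ∈ Finset.range r, φ (k (l + 1)) * ξ j ^ q ^ (l + 1 + 1) := by
          rw [← Finset.Ico_add_one_right_eq_Icc, Finset.sum_Ico_eq_sum_range,
            show r + 1 - 1 = r from by omega]
          exact Finset.sum_congr rfl fun l _ => by rw [show 1 + l = l + 1 from by omega]
        rw [h3] at h
        linear_combination h
      have hz : ∑ l : Fin r, (if (i : ℕ) = (l : ℕ) + 1 then (1 : F) else 0) * U l j = 0 :=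
        Finset.sum_eq_zero fun l _ => by rw [if_neg (by omega), zero_mul]
      rw [hAmul, hz, zero_add, hUr, hL, hroot1]
      rw [show aAux16 φ θ q k r i = -(θ ^ q) * (k r)⁻¹ from by
        rw [aAux16, if_pos h0]]
      field_simp
    · -- case i ≥ 1
      obtain ⟨i0, hi0⟩ : ∃ i0, (i : ℕ) = i0 + 1 := ⟨(i : ℕ) - 1, by omega⟩
      have hi0r : i0 < r := by
        have := i.isLt; omega
      have hLHS : φ (U i j) = ∑ l ∈ Finset.range (r - (i0 + 1)),
          (⇑φ.symm)^[i0] (k (l + i0 + 2)) * ξ j ^ q ^ (l + 1 + 1) := by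
        rw [hUe, map_sum]
        refine Finset.sum_congr (by rw [hi0]) fun l hl => ?_
        rw [map_mul, hxi, hi0, hsy, show l + (i0 + 1) + 1 = l + i0 + 2 from by omega]
      have hpeel : U ⟨i0, hi0r⟩ j =
          (∑ l ∈ Finset.range (r - (i0 + 1)),
            (⇑φ.symm)^[i0] (k (l + i0 + 2)) * ξ j ^ q ^ (l + 1 + 1))
          + (⇑φ.symm)^[i0] (k (i0 + 1)) * ξ j ^ q ^ (0 + 1) := by
        rw [hUe]
        simp only [Fin.val_mk]
        rw [show r - i0 = (r - (i0 + 1)) + 1 from by omega, Finset.sum_range_succ']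
        congr 1
        · refine Finset.sum_congr rfl fun l _ => ?_
          rw [show l + 1 + i0 + 1 = l + i0 + 2 from by omega]
        · rw [show 0 + i0 + 1 = i0 + 1 from by omega]
      have hfirst : ∑ l : Fin r, (if (i : ℕ) = (l : ℕ) + 1 then (1 : F) else 0) * U l j
          = U ⟨i0, hi0r⟩ j := by
        rw [Finset.sum_eq_single_of_mem (⟨i0, hi0r⟩ : Fin r) (Finset.mem_univ _)
          (fun b _ hbne => by
            rw [if_neg (fun hb => hbne (Fin.val_injective (by omega : (b : ℕ) = i0))),
              zero_mul])]
        rw [if_pos (by simpa using hi0), one_mul]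
      have hai : aAux16 φ θ q k r i = -((⇑φ.symm)^[i0] (k (i0 + 1))) * (k r)⁻¹ := by
        rw [aAux16, hi0, if_neg (by omega)]
        norm_num
      rw [hAmul, hfirst, hUr, hLHS, hpeel, hai]
      have hcancel : -((⇑φ.symm)^[i0] (k (i0 + 1))) * (k r)⁻¹ * (k r * ξ j ^ q)
          = -((⇑φ.symm)^[i0] (k (i0 + 1)) * ξ j ^ q ^ (0 + 1)) := by
        rw [show (0 + 1 : ℕ) = 1 from rfl, pow_one]
        field_simp
      rw [hcancel]
      ring
  have hAfull : Tw16 φ 1 U = AAux16 φ θ q k r * U := by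
    ext i j
    rw [Tw16_apply, zpow_one]
    exact hAU i j
  -- ## invertibility of U
  have hrow : ∀ (d : Fin r → F), B.mulVec d = 0 →
      ∀ i : Fin r, ∑ jj, d jj * ξ jj ^ q ^ (i : ℕ) = 0 := by
    intro d hd i
    have h2 : ∑ jj, B i jj * d jj = 0 := by
      simpa [Matrix.mulVec, dotProduct] using congrFun hd i
    rw [← h2]
    exact Finset.sum_congr rfl fun jj _ => by rw [hB, mul_comm]
  have hxr : ∀ d : Fin r → F, B.mulVec d = 0 → ∑ jj, d jj * ξ jj ^ q ^ r = 0 := by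
    intro d hd
    have hr0 : ∑ jj, d jj * ξ jj = 0 := by
      have := hrow d hd ⟨0, hr⟩
      simpa using this
    have hri : ∀ i, 1 ≤ i → i < r → ∑ jj, d jj * ξ jj ^ q ^ i = 0 := by
      intro i _ h2
      exact hrow d hd ⟨i, h2⟩
    have h0 : ∑ jj, d jj * (θ * ξ jj + ∑ i ∈ Finset.Icc 1 r, k i * ξ jj ^ q ^ i) = 0 := by
      simp only [hroot, mul_zero, Finset.sum_const_zero]
    have hexp : ∑ jj, d jj * (θ * ξ jj + ∑ i ∈ Finset.Icc 1 r, k i * ξ jj ^ q ^ i)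
        = θ * (∑ jj, d jj * ξ jj)
          + ∑ i ∈ Finset.Icc 1 r, k i * ∑ jj, d jj * ξ jj ^ q ^ i := by
      simp only [mul_add, Finset.mul_sum]
      rw [Finset.sum_add_distrib]
      congr 1
      · exact Finset.sum_congr rfl fun jj _ => by ring
      · rw [Finset.sum_comm]
        exact Finset.sum_congr rfl fun i _ => Finset.sum_congr rfl fun jj _ => by ring
    rw [hexp, hr0, mul_zero, zero_add] at h0
    rw [Finset.sum_eq_single_of_mem r (Finset.mem_Icc.mpr ⟨hr, le_refl r⟩)
      (fun i hi hne => by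
        rw [Finset.mem_Icc] at hi
        rw [hri i hi.1 (lt_of_le_of_ne hi.2 hne), mul_zero])] at h0
    exact (mul_eq_zero.mp h0).resolve_left hkr
  have hshift : ∀ d : Fin r → F, B.mulVec d = 0 →
      B.mulVec (fun jj => φ.symm (d jj)) = 0 := by
    intro d hd
    funext i
    show (B.mulVec fun jj => φ.symm (d jj)) i = 0
    apply φ.injective
    rw [map_zero]
    have h1 : φ ((B.mulVec fun jj => φ.symm (d jj)) i)
        = ∑ jj, d jj * ξ jj ^ q ^ ((i : ℕ) + 1) := by
      simp only [Matrix.mulVec, dotProduct, map_sum, map_mul, hB]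
      refine Finset.sum_congr rfl fun jj _ => ?_
      rw [hxi, φ.apply_symm_apply, mul_comm]
    rw [h1]
    rcases Nat.lt_or_ge ((i : ℕ) + 1) r with hlt | hge
    · exact hrow d hd ⟨(i : ℕ) + 1, hlt⟩
    · have h2 : (i : ℕ) + 1 = r := by have := i.isLt; omega
      rw [h2]; exact hxr d hd
  have hBker : ∀ c : Fin r → F, B.mulVec c = 0 → c = 0 := by
    intro c hc
    by_contra hne
    have hex : ∃ n, ∃ d : Fin r → F, B.mulVec d = 0 ∧ d ≠ 0 ∧
        (Finset.univ.filter fun jj => d jj ≠ 0).card = n := ⟨_, c, hc, hne, rfl⟩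
    obtain ⟨d, hd0, hdne, hdcard⟩ := Nat.find_spec hex
    have hj0 : ∃ j0, d j0 ≠ 0 := by
      by_contra h
      push_neg at h
      exact hdne (funext fun jj => h jj)
    obtain ⟨j0, hj0⟩ := hj0
    set e : Fin r → F := fun jj => (d j0)⁻¹ * d jj with he
    have he0 : B.mulVec e = 0 := by
      have h1 : e = (d j0)⁻¹ • d := by funext jj; simp [he, smul_eq_mul]
      rw [h1, Matrix.mulVec_smul, hd0, smul_zero]
    have hesup : ∀ jj, e jj ≠ 0 ↔ d jj ≠ 0 := by
      intro jj
      simp [he, hj0]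
    have hecard : (Finset.univ.filter fun jj => e jj ≠ 0).card = Nat.find hex := by
      rw [← hdcard]
      congr 1
      ext jj
      simp only [Finset.mem_filter, Finset.mem_univ, true_and]
      exact hesup jj
    have hej0 : e j0 = 1 := by rw [he]; exact inv_mul_cancel₀ hj0
    set f : Fin r → F := fun jj => φ.symm (e jj) - e jj with hf
    have hf0 : B.mulVec f = 0 := by
      have h1 : f = (fun jj => φ.symm (e jj)) - e := rfl
      rw [h1, Matrix.mulVec_sub, hshift e he0, he0, sub_zero]
    have hfsub : (Finset.univ.filter fun jj => f jj ≠ 0)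
        ⊆ (Finset.univ.filter fun jj => e jj ≠ 0).erase j0 := by
      intro jj hjj
      rw [Finset.mem_filter] at hjj
      rw [Finset.mem_erase, Finset.mem_filter]
      refine ⟨?_, Finset.mem_univ _, ?_⟩
      · rintro rfl
        apply hjj.2
        rw [hf]
        simp [hej0]
      · by_contra hz
        apply hjj.2
        rw [hf]
        simp [hz]
    have hflt : (Finset.univ.filter fun jj => f jj ≠ 0).card < Nat.find hex := by
      calc (Finset.univ.filter fun jj => f jj ≠ 0).card
          ≤ ((Finset.univ.filter fun jj => e jj ≠ 0).erase j0).card :=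
            Finset.card_le_card hfsub
        _ < (Finset.univ.filter fun jj => e jj ≠ 0).card :=
            Finset.card_erase_lt_of_mem (by
              rw [Finset.mem_filter]
              exact ⟨Finset.mem_univ _, by rw [hej0]; exact one_ne_zero⟩)
        _ = Nat.find hex := hecard
    have hfzero : f = 0 := by
      by_contra hfne
      exact Nat.find_min hex hflt ⟨f, hf0, hfne, rfl⟩
    have hfix : ∀ jj, e jj ^ q = e jj := by
      intro jj
      have h1 : φ.symm (e jj) - e jj = 0 := by
        have := congrFun hfzero jj
        simpa [hf] using this
      have h2 : φ.symm (e jj) = e jj := sub_eq_zero.mp h1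
      have h3 := congrArg φ h2
      rw [φ.apply_symm_apply] at h3
      rw [← hφ]
      exact h3.symm
    have hrow0 : ∑ jj, e jj * ξ jj = 0 := by
      have := hrow e he0 ⟨0, hr⟩
      simpa using this
    have := hind e hfix hrow0 j0
    rw [hej0] at this
    exact one_ne_zero this
  have hVtker : ∀ c : Fin r → F, V.transpose.mulVec c = 0 → c = 0 := by
    intro c hc
    have key : ∀ n : ℕ, ∀ i : Fin r, (i : ℕ) = n → c i = 0 := by
      intro n
      induction n using Nat.strong_induction_on with
      | _ n ih =>
        intro i hi
        have hnr : n < r := hi ▸ i.isLt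
        have h1 : ∑ i', V i' ⟨r - 1 - n, by omega⟩ * c i' = 0 := by
          simpa [Matrix.mulVec, dotProduct, Matrix.transpose_apply]
            using congrFun hc ⟨r - 1 - n, by omega⟩
        have h2 : ∑ i', V i' ⟨r - 1 - n, by omega⟩ * c i' = k r * c i := by
          rw [Finset.sum_eq_single_of_mem i (Finset.mem_univ _) (fun b _ hbne => ?_)]
        -- main term
          · rw [hV]
            simp only [Fin.val_mk]
            rw [if_pos (by omega : (i : ℕ) + (r - 1 - n) + 1 ≤ r),
              show (i : ℕ) + (r - 1 - n) + 1 = r from by omega, hfixr]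
          · rcases Nat.lt_or_ge (b : ℕ) n with hb | hb
            · rw [ih (b : ℕ) hb b rfl, mul_zero]
            · have hbgt : n < (b : ℕ) := by
                rcases Nat.eq_or_lt_of_le hb with h | h
                · exact absurd (Fin.val_injective (h.symm.trans hi.symm) : b = i) hbne
                · exact h
              rw [hV, if_neg, zero_mul]
              simp only [Fin.val_mk]
              have := b.isLt
              omega
        rw [h2] at h1
        exact (mul_eq_zero.mp h1).resolve_left hkr
    funext i
    exact key (i : ℕ) i rfl
  have hUdet : IsUnit U.det := by
    rw [isUnit_iff_ne_zero]
    intro hdet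
    obtain ⟨c, hcne, hc0⟩ := Matrix.exists_mulVec_eq_zero_iff.mpr hdet
    apply hcne
    rw [hU, ← Matrix.mulVec_mulVec] at hc0
    have h1 : (B.map ⇑φ).mulVec c = 0 := hVtker _ hc0
    have h2 : B.mulVec (fun jj => φ.symm (c jj)) = 0 := by
      funext i
      show (B.mulVec fun jj => φ.symm (c jj)) i = 0
      apply φ.injective
      rw [map_zero]
      have h3 : φ ((B.mulVec fun jj => φ.symm (c jj)) i) = ((B.map ⇑φ).mulVec c) i := by
        simp only [Matrix.mulVec, dotProduct, map_sum, map_mul, Matrix.map_apply]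
        exact Finset.sum_congr rfl fun jj _ => by rw [φ.apply_symm_apply]
      rw [h3, h1]
      rfl
    have h4 := hBker _ h2
    funext jj
    have h5 : φ.symm (c jj) = 0 := by
      have := congrFun h4 jj
      simpa using this
    show c jj = 0
    calc c jj = φ (φ.symm (c jj)) := (φ.apply_symm_apply _).symm
      _ = 0 := by rw [h5, map_zero]
  have hUU : U * U⁻¹ = 1 := Matrix.mul_nonsing_inv U hUdet
  -- ## tz is given by integer powers of φ
  have tz_eq : ∀ (n : ℤ) (x : F), tz n x = (φ ^ n) x := by
    intro n x
    cases n with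
    | ofNat mm =>
      have h1 := (htz mm x).1
      have h2 : (φ ^ (Int.ofNat mm)) x = (⇑φ)^[mm] x := by
        rw [show (Int.ofNat mm) = ((mm : ℕ) : ℤ) from rfl, zpow_natCast, powApply16]
      exact h1.trans h2.symm
    | negSucc mm =>
      have h1 := (htz (mm + 1) x).2
      have h2 : (φ ^ (Int.negSucc mm)) x = (⇑φ.symm)^[mm + 1] x := by
        rw [show Int.negSucc mm = -(((mm + 1 : ℕ)) : ℤ) from by
          rw [Int.negSucc_eq]; push_cast; ring]
        rw [zpow_neg, zpow_natCast]
        exact symmPowApply16 φ (mm + 1) x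
      exact h1.trans h2.symm
  have mulApply : ∀ (e₁ e₂ : F ≃+* F) (x : F), (e₁ * e₂) x = e₁ (e₂ x) := fun _ _ _ => rfl
  -- ## the twisted recursion
  have hTU : ∀ s : ℕ, U = Qm16 φ (AAux16 φ θ q k r) s * Tw16 φ (-(s : ℤ)) U := by
    intro s
    induction s with
    | zero =>
      show U = 1 * Tw16 φ (-((0 : ℕ) : ℤ)) U
      rw [one_mul, Nat.cast_zero, neg_zero, Tw16_zero]
    | succ s ih =>
      have h1 : Tw16 φ (-((s : ℤ) + 1)) (Tw16 φ 1 U)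
          = Tw16 φ (-((s : ℤ) + 1)) (AAux16 φ θ q k r * U) := by rw [hAfull]
      rw [Tw16_Tw16, Tw16_mul, show -((s : ℤ) + 1) + 1 = -(s : ℤ) from by ring] at h1
      show U = Qm16 φ (AAux16 φ θ q k r) s * Tw16 φ (-((s + 1 : ℕ) : ℤ)) (AAux16 φ θ q k r)
          * Tw16 φ (-((s + 1 : ℕ) : ℤ)) U
      rw [show -((s + 1 : ℕ) : ℤ) = -((s : ℤ) + 1) from by push_cast; ring]
      rw [mul_assoc, ← h1]
      exact ih
  have hQ : ∀ s : ℕ, ∀ i t : Fin r, s + (t : ℕ) < r →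
      Qm16 φ (AAux16 φ θ q k r) s i t = if (i : ℕ) = s + (t : ℕ) then 1 else 0 := by
    intro s
    induction s with
    | zero =>
      intro i t ht
      show (1 : Matrix (Fin r) (Fin r) F) i t = _
      rw [Matrix.one_apply]
      by_cases hc : (i : ℕ) = 0 + (t : ℕ)
      · rw [if_pos (Fin.val_injective (by omega : (i : ℕ) = (t : ℕ))), if_pos hc]
      · rw [if_neg (fun he => hc (by rw [he]; omega)), if_neg hc]
    | succ s ih =>
      intro i t ht
      have htr1 : (t : ℕ) + 1 < r := by omega
      show (Qm16 φ (AAux16 φ θ q k r) s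
          * Tw16 φ (-((s + 1 : ℕ) : ℤ)) (AAux16 φ θ q k r)) i t = _
      rw [Matrix.mul_apply]
      have hA' : ∀ l : Fin r, Tw16 φ (-((s + 1 : ℕ) : ℤ)) (AAux16 φ θ q k r) l t
          = if l = (⟨(t : ℕ) + 1, htr1⟩ : Fin r) then 1 else 0 := by
        intro l
        rw [Tw16_apply]
        show (φ ^ (-((s + 1 : ℕ) : ℤ)))
          ((if (l : ℕ) = (t : ℕ) + 1 then (1 : F) else 0) +
            (if (t : ℕ) = r - 1 then aAux16 φ θ q k r l else 0)) = _
        rw [if_neg (by omega : ¬ (t : ℕ) = r - 1), add_zero]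
        by_cases hl : (l : ℕ) = (t : ℕ) + 1
        · rw [if_pos hl, map_one, if_pos (Fin.val_injective hl)]
        · rw [if_neg hl, map_zero, if_neg (fun he => hl (congrArg Fin.val he))]
      rw [Finset.sum_congr rfl fun l _ => by rw [hA' l]]
      simp only [mul_ite, mul_one, mul_zero]
      rw [Finset.sum_ite_eq' Finset.univ (⟨(t : ℕ) + 1, htr1⟩ : Fin r)
        (Qm16 φ (AAux16 φ θ q k r) s i), if_pos (Finset.mem_univ _)]
      rw [ih i ⟨(t : ℕ) + 1, htr1⟩ (by simpa using by omega : s + (((⟨(t : ℕ) + 1, htr1⟩ : Fin r)) : ℕ) < r)]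
      have hval : ((⟨(t : ℕ) + 1, htr1⟩ : Fin r) : ℕ) = (t : ℕ) + 1 := rfl
      rw [hval, show s + ((t : ℕ) + 1) = s + 1 + (t : ℕ) from by omega]
  have hQs : ∀ s : ℕ, U * Tw16 φ (-(s : ℤ)) U⁻¹ = Qm16 φ (AAux16 φ θ q k r) s := by
    intro s
    calc U * Tw16 φ (-(s : ℤ)) U⁻¹
        = (Qm16 φ (AAux16 φ θ q k r) s * Tw16 φ (-(s : ℤ)) U) * Tw16 φ (-(s : ℤ)) U⁻¹ := by
          rw [← hTU s]
      _ = Qm16 φ (AAux16 φ θ q k r) s * Tw16 φ (-(s : ℤ)) (U * U⁻¹) := by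
          rw [mul_assoc, Tw16_mul]
      _ = Qm16 φ (AAux16 φ θ q k r) s := by rw [hUU, Tw16_one, mul_one]
  -- ## the main orthogonality computation
  have main : ∀ j j' : Fin r,
      (∑ l, tz ((r : ℤ) - 2) (U j.rev l) * tz (((j' : ℕ) : ℤ) - 1) (U⁻¹ l ⟨0, hr⟩))
        = if j = j' then (1 : F) else 0 := by
    intro j j'
    have hj'r := j'.isLt
    set s : ℕ := r - 1 - (j' : ℕ) with hs
    have hsr : s < r := by omega
    have hcast : (((j' : ℕ) : ℤ) - 1) = ((r : ℤ) - 2) + (-(s : ℤ)) := by omega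
    calc ∑ l, tz ((r : ℤ) - 2) (U j.rev l) * tz (((j' : ℕ) : ℤ) - 1) (U⁻¹ l ⟨0, hr⟩)
        = ∑ l, (φ ^ ((r : ℤ) - 2)) (U j.rev l * (φ ^ (-(s : ℤ))) (U⁻¹ l ⟨0, hr⟩)) := by
          refine Finset.sum_congr rfl fun l _ => ?_
          rw [tz_eq, tz_eq, hcast, zpow_add, mulApply, map_mul]
      _ = (φ ^ ((r : ℤ) - 2)) (∑ l, U j.rev l * (φ ^ (-(s : ℤ))) (U⁻¹ l ⟨0, hr⟩)) :=
          (map_sum _ _ _).symm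
      _ = (φ ^ ((r : ℤ) - 2)) ((U * Tw16 φ (-(s : ℤ)) U⁻¹) j.rev ⟨0, hr⟩) := by
          rw [Matrix.mul_apply]
          rfl
      _ = (φ ^ ((r : ℤ) - 2)) (Qm16 φ (AAux16 φ θ q k r) s j.rev ⟨0, hr⟩) := by
          rw [hQs s]
      _ = (φ ^ ((r : ℤ) - 2))
            (if ((j.rev : Fin r) : ℕ) = s + (((⟨0, hr⟩ : Fin r)) : ℕ) then 1 else 0) := by
          rw [hQ s j.rev ⟨0, hr⟩ (by simpa using hsr)]
      _ = if j = j' then (1 : F) else 0 := by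
          have hrev : (((j.rev : Fin r)) : ℕ) = s + (((⟨0, hr⟩ : Fin r)) : ℕ) ↔ j = j' := by
            rw [Fin.val_rev]
            have h1 := j.isLt
            rw [show (((⟨0, hr⟩ : Fin r)) : ℕ) = 0 from rfl, Fin.ext_iff]
            omega
          by_cases hjj : j = j'
          · rw [if_pos (hrev.mpr hjj), if_pos hjj, map_one]
          · rw [if_neg (fun hc => hjj (hrev.mp hc)), if_neg hjj, map_zero]
  -- ## assembling
  have hMW : (Matrix.of fun (jj l : Fin r) => tz ((r : ℤ) - 2) (U jj.rev l))
      * (Matrix.of fun (i jj : Fin r) => tz (((jj : ℕ) : ℤ) - 1) (U⁻¹ i ⟨0, hr⟩)) = 1 := by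
    ext j j'
    rw [Matrix.mul_apply, Matrix.one_apply]
    exact main j j'
  have hWM := mul_eq_one_comm.mp hMW
  ext i l
  rw [Matrix.sum_apply]
  calc ∑ j : Fin r, Matrix.vecMulVec
        (fun i => tz (((j : ℕ) : ℤ) - 1) (U⁻¹ i ⟨0, hr⟩))
        (fun l => tz ((r : ℤ) - 2) (U j.rev l)) i l
      = ∑ j : Fin r, (Matrix.of fun (i jj : Fin r) =>
            tz (((jj : ℕ) : ℤ) - 1) (U⁻¹ i ⟨0, hr⟩)) i j
          * (Matrix.of fun (jj l : Fin r) => tz ((r : ℤ) - 2) (U jj.rev l)) j l :=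
        Finset.sum_congr rfl fun j _ => rfl
    _ = ((Matrix.of fun (i jj : Fin r) => tz (((jj : ℕ) : ℤ) - 1) (U⁻¹ i ⟨0, hr⟩))
          * (Matrix.of fun (jj l : Fin r) => tz ((r : ℤ) - 2) (U jj.rev l))) i l :=
        (Matrix.mul_apply).symm
    _ = (1 : Matrix (Fin r) (Fin r) F) i l := by rw [hWM]
end

section
/- Let F be a field of characteristic p containing F_q, let θ, a, k, k_1, k_2, … ∈ F with θ ≠ 0. Define a sequence by c_2 = −(k/θ)·a^{q^2} − (k_1/θ)·a^{q}, and c_{m+1} = (k/θ)·c_m^{q} − (k_m/θ)·a^{q} for m ≥ 2. Then for every m ≥ 2, c_m = −( a^{q^m}·k^{E(m−1)}/θ^{E(m−1)} + Σ_{u=1}^{m−1} k_u^{q^{m−1−u}} · a^{q^{m−u}} · k^{E(m−1−u)} / θ^{E(m−u)} ), where E(j) = 1 + q + ⋯ + q^{j−1} for j ≥ 1 and E(0) = 0. -/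
/-- Closed form for the cofactor recursion: with `E(j) = 1 + q + ⋯ + q^{j−1}`,
`c_2 = −(k/θ)a^{q²} − (k_1/θ)a^q` and `c_{m+1} = (k/θ)c_m^q − (k_m/θ)a^q`
for `m ≥ 2`, one has for all `m ≥ 2`:
`c_m = −(a^{q^m} k^{E(m−1)}/θ^{E(m−1)} +
  Σ_{u=1}^{m−1} k_u^{q^{m−1−u}} a^{q^{m−u}} k^{E(m−1−u)}/θ^{E(m−u)})`. -/
theorem stmt17 {F : Type*} [Field F] (p e q : ℕ) [Fact p.Prime] [CharP F p]
    (he : 0 < e) (hq : q = p ^ e)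
    (θ a kk : F) (hθ : θ ≠ 0) (k : ℕ → F)
    (E : ℕ → ℕ) (hE : ∀ j, E j = ∑ i ∈ Finset.range j, q ^ i)
    (c : ℕ → F)
    (hc2 : c 2 = -(kk / θ) * a ^ q ^ 2 - (k 1 / θ) * a ^ q)
    (hrec : ∀ m, 2 ≤ m → c (m + 1) = (kk / θ) * (c m) ^ q - (k m / θ) * a ^ q) :
    ∀ m, 2 ≤ m → c m =
      -(a ^ q ^ m * kk ^ E (m - 1) / θ ^ E (m - 1) +
        ∑ u ∈ Finset.Icc 1 (m - 1),
          k u ^ q ^ (m - 1 - u) * a ^ q ^ (m - u) * kk ^ E (m - 1 - u) /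
            θ ^ E (m - u)) := by
  haveI : ExpChar F p := .prime Fact.out
  have hE0 : E 0 = 0 := by simp [hE]
  have hEs : ∀ j, E (j + 1) = q * E j + 1 := by
    intro j
    simp [hE, Finset.sum_range_succ', pow_succ', Finset.mul_sum]
  have hE1 : E 1 = 1 := by rw [hEs, hE0]; ring
  -- Frobenius ring hom
  have hf : ∀ x : F, x ^ q = iterateFrobenius F p e x := fun x => by
    rw [iterateFrobenius_def, hq]
  -- step lemma for nested powers
  have hstep : ∀ (x : F) (j : ℕ), (x ^ q ^ j) ^ q = x ^ q ^ (j + 1) := fun x j => by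
    rw [← pow_mul, pow_succ]
  have hEpow : ∀ (x : F) (j : ℕ), (x ^ E j) ^ q * x = x ^ E (j + 1) := fun x j => by
    rw [← pow_mul, hEs, mul_comm (E j) q, pow_add, pow_one]
  intro m hm
  induction m, hm using Nat.le_induction with
  | base =>
      rw [hc2]
      simp only [show (2:ℕ) - 1 = 1 from rfl, Finset.Icc_self, Finset.sum_singleton]
      norm_num [hE0, hE1]
      ring
  | succ m hm ih =>
      have h1 : 1 ≤ m := le_trans (by norm_num) hm
      have hms : m - 1 + 1 = m := Nat.succ_pred_eq_of_pos h1
      have hcomm : ∀ (x : F) (n : ℕ), (x ^ q) ^ n = (x ^ n) ^ q := fun x n => by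
        rw [← pow_mul, ← pow_mul, mul_comm]
      rw [hrec m hm, ih]
      simp only [Nat.add_sub_cancel]
      rw [hf]
      simp only [map_neg, map_add, map_sum, map_div₀, map_mul, map_pow]
      simp only [← hf]
      simp only [hcomm]
      simp only [hstep]
      have hsplit :
          (∑ u ∈ Finset.Icc 1 m,
            k u ^ q ^ (m - u) * a ^ q ^ (m + 1 - u) * kk ^ E (m - u) /
              θ ^ E (m + 1 - u))
          = (∑ u ∈ Finset.Icc 1 (m - 1),
              k u ^ q ^ (m - u) * a ^ q ^ (m + 1 - u) * kk ^ E (m - u) /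
                θ ^ E (m + 1 - u)) + k m / θ * a ^ q := by
        have h := Finset.sum_Icc_succ_top (a := 1) (b := m - 1) (by omega)
          (fun u => k u ^ q ^ (m - u) * a ^ q ^ (m + 1 - u) * kk ^ E (m - u) /
              θ ^ E (m + 1 - u))
        rw [hms] at h
        rw [h, Nat.sub_self, show m + 1 - m = 1 by omega, hE0, hE1]
        simp [pow_zero, pow_one]
        ring
      rw [hsplit]
      have hA : kk / θ * (a ^ q ^ (m + 1) * (kk ^ E (m - 1)) ^ q / (θ ^ E (m - 1)) ^ q)
          = a ^ q ^ (m + 1) * kk ^ E m / θ ^ E m := by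
        rw [div_mul_div_comm, mul_comm kk _, mul_assoc, hEpow kk (m - 1),
          mul_comm θ _, hEpow θ (m - 1), hms]
      have hB : ∀ u ∈ Finset.Icc 1 (m - 1),
          kk / θ * (k u ^ q ^ (m - 1 - u + 1) * a ^ q ^ (m - u + 1) *
              (kk ^ E (m - 1 - u)) ^ q / (θ ^ E (m - u)) ^ q)
          = k u ^ q ^ (m - u) * a ^ q ^ (m + 1 - u) * kk ^ E (m - u) /
              θ ^ E (m + 1 - u) := by
        intro u hu
        simp only [Finset.mem_Icc] at hu
        rw [div_mul_div_comm, mul_comm kk _, mul_assoc, hEpow kk (m - 1 - u),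
          mul_comm θ _, hEpow θ (m - u)]
        rw [show m - 1 - u + 1 = m - u by omega, show m - u + 1 = m + 1 - u by omega]
      rw [mul_neg, mul_add, Finset.mul_sum, hA,
        Finset.sum_congr rfl hB]
      ring
end
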